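/- arXiv:0804.1240 — 5 statements merged into one kernel-verified Lean document; each statement's English description precedes it below -/
import Mathlib

section
/- The asymptotic transverse expansion rate is constant on orbits: if there exists a groupoid element from x to y of word length 1, and for all composable germs the derivative satisfies the submultiplicative norm estimates, then e(x) = e(y), where e(x) = limsup_{ℓ→∞} max{ln(max(‖Dγ‖,‖(Dγ)^{-1}‖)) : γ ∈ Γ^x, ‖γ‖_x ≤ ℓ}/ℓ. -/
open Filter Set

/-- The pseudo-norm `|A| = ln(max(‖A‖, ‖A⁻¹‖))` of an invertible linear map of `ℝ^q`. -/
noncomputable def germExpansion (q : ℕ)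
    (A : (EuclideanSpace ℝ (Fin q) →L[ℝ] EuclideanSpace ℝ (Fin q))ˣ) : ℝ :=
  Real.log (max ‖(A : EuclideanSpace ℝ (Fin q) →L[ℝ] EuclideanSpace ℝ (Fin q))‖
    ‖((A⁻¹ : (EuclideanSpace ℝ (Fin q) →L[ℝ] EuclideanSpace ℝ (Fin q))ˣ) :
      EuclideanSpace ℝ (Fin q) →L[ℝ] EuclideanSpace ℝ (Fin q))‖)

/-- The asymptotic transverse expansion rate
`e(x) = limsup_ℓ max{ln(max(‖Dγ‖,‖(Dγ)⁻¹‖)) : γ ∈ Γ^x, ‖γ‖_x ≤ ℓ}/ℓ`. -/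
noncomputable def expansionRate {T G : Type*} (q : ℕ) (s : G → T) (wlen : G → ℕ)
    (D : G → (EuclideanSpace ℝ (Fin q) →L[ℝ] EuclideanSpace ℝ (Fin q))ˣ) (x : T) : ℝ :=
  Filter.limsup (fun ℓ : ℕ =>
    sSup {v : ℝ | ∃ γ : G, s γ = x ∧ wlen γ ≤ ℓ ∧ v = germExpansion q (D γ)} / ℓ) atTop

lemma one_le_maxnorm {q : ℕ} (hq : 0 < q)
    (A : (EuclideanSpace ℝ (Fin q) →L[ℝ] EuclideanSpace ℝ (Fin q))ˣ) :
    1 ≤ max ‖(A : EuclideanSpace ℝ (Fin q) →L[ℝ] EuclideanSpace ℝ (Fin q))‖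
      ‖((A⁻¹ : _ˣ) : EuclideanSpace ℝ (Fin q) →L[ℝ] EuclideanSpace ℝ (Fin q))‖ := by
  haveI : Nonempty (Fin q) := Fin.pos_iff_nonempty.mp hq
  haveI : Nontrivial (EuclideanSpace ℝ (Fin q)) := by infer_instance
  have h1 : (1:ℝ) = ‖((1 : (EuclideanSpace ℝ (Fin q) →L[ℝ] EuclideanSpace ℝ (Fin q))ˣ) :
      EuclideanSpace ℝ (Fin q) →L[ℝ] EuclideanSpace ℝ (Fin q))‖ := by
    simp
  have h2 : (1:ℝ) ≤ ‖(A : EuclideanSpace ℝ (Fin q) →L[ℝ] EuclideanSpace ℝ (Fin q))‖ *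
      ‖((A⁻¹ : _ˣ) : EuclideanSpace ℝ (Fin q) →L[ℝ] EuclideanSpace ℝ (Fin q))‖ := by
    rw [h1, ← mul_inv_cancel A, Units.val_mul]
    exact norm_mul_le _ _
  set a := ‖(A : EuclideanSpace ℝ (Fin q) →L[ℝ] EuclideanSpace ℝ (Fin q))‖
  set b := ‖((A⁻¹ : _ˣ) : EuclideanSpace ℝ (Fin q) →L[ℝ] EuclideanSpace ℝ (Fin q))‖
  have ha : 0 ≤ a := norm_nonneg _
  have hb : 0 ≤ b := norm_nonneg _
  rcases le_total a b with h | h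
  · have : 1 ≤ b * b := le_trans h2 (by nlinarith)
    exact le_max_of_le_right (by nlinarith)
  · have : 1 ≤ a * a := le_trans h2 (by nlinarith)
    exact le_max_of_le_left (by nlinarith)

lemma germExpansion_zero {q : ℕ} (hq : q = 0)
    (A : (EuclideanSpace ℝ (Fin q) →L[ℝ] EuclideanSpace ℝ (Fin q))ˣ) :
    germExpansion q A = 0 := by
  subst hq
  haveI : Subsingleton (EuclideanSpace ℝ (Fin 0)) := by infer_instance
  haveI : Subsingleton (EuclideanSpace ℝ (Fin 0) →L[ℝ] EuclideanSpace ℝ (Fin 0)) := by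
    infer_instance
  have h1 : (A : EuclideanSpace ℝ (Fin 0) →L[ℝ] EuclideanSpace ℝ (Fin 0)) = 0 :=
    Subsingleton.elim _ _
  have h2 : ((A⁻¹ : _ˣ) : EuclideanSpace ℝ (Fin 0) →L[ℝ] EuclideanSpace ℝ (Fin 0)) = 0 :=
    Subsingleton.elim _ _
  simp only [germExpansion, h1, h2, norm_zero, max_self, Real.log_zero]

lemma germExpansion_nonneg (q : ℕ)
    (A : (EuclideanSpace ℝ (Fin q) →L[ℝ] EuclideanSpace ℝ (Fin q))ˣ) :
    0 ≤ germExpansion q A := by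
  rcases Nat.eq_zero_or_pos q with hq | hq
  · rw [germExpansion_zero hq]
  · exact Real.log_nonneg (one_le_maxnorm hq A)

lemma germExpansion_one (q : ℕ) :
    germExpansion q (1 : (EuclideanSpace ℝ (Fin q) →L[ℝ] EuclideanSpace ℝ (Fin q))ˣ) = 0 := by
  rcases Nat.eq_zero_or_pos q with hq | hq
  · exact germExpansion_zero hq _
  · haveI : Nonempty (Fin q) := Fin.pos_iff_nonempty.mp hq
    haveI : Nontrivial (EuclideanSpace ℝ (Fin q)) := by infer_instance
    simp [germExpansion]

lemma germExpansion_inv (q : ℕ)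
    (A : (EuclideanSpace ℝ (Fin q) →L[ℝ] EuclideanSpace ℝ (Fin q))ˣ) :
    germExpansion q A⁻¹ = germExpansion q A := by
  unfold germExpansion
  rw [inv_inv, max_comm]

lemma germExpansion_mul_le (q : ℕ)
    (A B : (EuclideanSpace ℝ (Fin q) →L[ℝ] EuclideanSpace ℝ (Fin q))ˣ) :
    germExpansion q (A * B) ≤ germExpansion q A + germExpansion q B := by
  rcases Nat.eq_zero_or_pos q with hq | hq
  · rw [germExpansion_zero hq, germExpansion_zero hq, germExpansion_zero hq]; norm_num
  · set E := EuclideanSpace ℝ (Fin q)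
    set a := max ‖(A : E →L[ℝ] E)‖ ‖((A⁻¹ : _ˣ) : E →L[ℝ] E)‖ with ha
    set b := max ‖(B : E →L[ℝ] E)‖ ‖((B⁻¹ : _ˣ) : E →L[ℝ] E)‖ with hb
    have h1 : 1 ≤ a := one_le_maxnorm hq A
    have h2 : 1 ≤ b := one_le_maxnorm hq B
    have hAB : max ‖((A*B : _ˣ) : E →L[ℝ] E)‖ ‖(((A*B)⁻¹ : _ˣ) : E →L[ℝ] E)‖ ≤ a * b := by
      apply max_le
      · calc ‖((A*B : _ˣ) : E →L[ℝ] E)‖ ≤ ‖(A : E →L[ℝ] E)‖ * ‖(B : E →L[ℝ] E)‖ := by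
              rw [Units.val_mul]; exact norm_mul_le _ _
          _ ≤ a * b := by
              have := le_max_left ‖(A : E →L[ℝ] E)‖ ‖((A⁻¹ : _ˣ) : E →L[ℝ] E)‖
              have := le_max_left ‖(B : E →L[ℝ] E)‖ ‖((B⁻¹ : _ˣ) : E →L[ℝ] E)‖
              have := norm_nonneg (A : E →L[ℝ] E)
              have := norm_nonneg (B : E →L[ℝ] E)
              nlinarith
      · calc ‖(((A*B)⁻¹ : _ˣ) : E →L[ℝ] E)‖
              = ‖((B⁻¹ : _ˣ) : E →L[ℝ] E) * ((A⁻¹ : _ˣ) : E →L[ℝ] E)‖ := by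
                rw [mul_inv_rev, Units.val_mul]
          _ ≤ ‖((B⁻¹ : _ˣ) : E →L[ℝ] E)‖ * ‖((A⁻¹ : _ˣ) : E →L[ℝ] E)‖ := norm_mul_le _ _
          _ ≤ a * b := by
              have := le_max_right ‖(A : E →L[ℝ] E)‖ ‖((A⁻¹ : _ˣ) : E →L[ℝ] E)‖
              have := le_max_right ‖(B : E →L[ℝ] E)‖ ‖((B⁻¹ : _ˣ) : E →L[ℝ] E)‖
              have := norm_nonneg ((A⁻¹ : _ˣ) : E →L[ℝ] E)
              have := norm_nonneg ((B⁻¹ : _ˣ) : E →L[ℝ] E)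
              nlinarith
    have hab : germExpansion q (A * B) ≤ Real.log (a * b) := by
      unfold germExpansion
      exact Real.log_le_log (lt_of_lt_of_le one_pos (one_le_maxnorm hq (A*B))) hAB
    rw [Real.log_mul (by linarith) (by linarith)] at hab
    exact hab


lemma bdd_transfer (F G : ℕ → ℝ) (C : ℝ) (hC : 0 ≤ C)
    (h1 : ∀ ℓ, F ℓ ≤ G (ℓ+1) + C)
    (hb : IsBoundedUnder (· ≤ ·) atTop (fun ℓ : ℕ => G ℓ / ℓ)) :
    IsBoundedUnder (· ≤ ·) atTop (fun ℓ : ℕ => F ℓ / ℓ) := by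
  obtain ⟨M, hM⟩ := hb
  rw [eventually_map, eventually_atTop] at hM
  obtain ⟨N, hN⟩ := hM
  set M' := max M 0 with hM'
  have hM'0 : 0 ≤ M' := le_max_right _ _
  refine ⟨2 * M' + C, ?_⟩
  rw [eventually_map, eventually_atTop]
  refine ⟨max N 1, fun ℓ hℓ => ?_⟩
  have hℓ1 : 1 ≤ ℓ := le_trans (le_max_right _ _) hℓ
  have hℓN : N ≤ ℓ + 1 := le_trans (le_trans (le_max_left _ _) hℓ) (Nat.le_succ ℓ)
  have hG : G (ℓ+1) / (ℓ+1 : ℕ) ≤ M' := le_trans (hN (ℓ+1) hℓN) (le_max_left _ _)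
  have hpos : (0:ℝ) < ((ℓ+1 : ℕ) : ℝ) := by positivity
  rw [div_le_iff₀ hpos] at hG
  have hℓpos : (0:ℝ) < (ℓ : ℝ) := by exact_mod_cast hℓ1
  show F ℓ / (ℓ:ℝ) ≤ 2 * M' + C
  rw [div_le_iff₀ hℓpos]
  have h := h1 ℓ
  have hcast : ((ℓ+1 : ℕ) : ℝ) = (ℓ : ℝ) + 1 := by push_cast; ring
  rw [hcast] at hG
  have h1ℓ : (1:ℝ) ≤ (ℓ : ℝ) := by exact_mod_cast hℓ1
  nlinarith

lemma aux_limsup (F G : ℕ → ℝ) (hF0 : ∀ ℓ, 0 ≤ F ℓ) (hG0 : ∀ ℓ, 0 ≤ G ℓ)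
    (C : ℝ) (hC : 0 ≤ C)
    (h1 : ∀ ℓ, F ℓ ≤ G (ℓ+1) + C) (h2 : ∀ ℓ, G ℓ ≤ F (ℓ+1) + C) :
    limsup (fun ℓ : ℕ => F ℓ / ℓ) atTop ≤ limsup (fun ℓ : ℕ => G ℓ / ℓ) atTop := by
  set a := fun ℓ : ℕ => F ℓ / ℓ with hadef
  set b := fun ℓ : ℕ => G ℓ / ℓ with hbdef
  have ha0 : ∀ ℓ, 0 ≤ a ℓ := fun ℓ => div_nonneg (hF0 ℓ) (Nat.cast_nonneg ℓ)
  have hb0 : ∀ ℓ, 0 ≤ b ℓ := fun ℓ => div_nonneg (hG0 ℓ) (Nat.cast_nonneg ℓ)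
  by_cases hb : IsBoundedUnder (· ≤ ·) atTop b
  · -- bounded case
    have ha : IsBoundedUnder (· ≤ ·) atTop a := bdd_transfer F G C hC h1 hb
    have hacobdd : IsCoboundedUnder (· ≤ ·) atTop a :=
      IsCoboundedUnder.of_frequently_ge (Frequently.of_forall (fun ℓ => ha0 ℓ))
    set L := limsup b atTop with hL
    refine le_of_forall_pos_le_add (fun ε hε => ?_)
    have hev : ∀ᶠ ℓ in atTop, b ℓ < L + ε/2 :=
      eventually_lt_of_limsup_lt (by linarith) hb
    have hLpos : 0 < L + ε/2 := by
      obtain ⟨ℓ, hℓ⟩ := hev.exists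
      exact lt_of_le_of_lt (hb0 ℓ) hℓ
    rw [eventually_atTop] at hev
    obtain ⟨N₀, hN₀⟩ := hev
    refine limsup_le_of_le hacobdd ?_
    rw [eventually_atTop]
    refine ⟨max (max N₀ 1) (⌈(2*(L+C)+ε)/ε⌉₊ + 1), fun ℓ hℓ => ?_⟩
    have hℓ1 : 1 ≤ ℓ := le_trans (le_trans (le_max_right _ _) (le_max_left _ _)) hℓ
    have hℓN₀ : N₀ ≤ ℓ + 1 :=
      le_trans (le_trans (le_trans (le_max_left _ _) (le_max_left _ _)) hℓ) (Nat.le_succ ℓ)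
    have hℓceil : (⌈(2*(L+C)+ε)/ε⌉₊ : ℕ) ≤ ℓ := le_trans (Nat.le_succ _)
      (le_trans (le_max_right _ _) hℓ)
    have hℓbig : (2*(L+C)+ε)/ε ≤ (ℓ : ℝ) :=
      le_trans (Nat.le_ceil _) (by exact_mod_cast hℓceil)
    have hℓε : 2*(L+C)+ε ≤ (ℓ : ℝ) * ε := by
      rw [div_le_iff₀ hε] at hℓbig; linarith
    have hbℓ : b (ℓ+1) < L + ε/2 := hN₀ (ℓ+1) hℓN₀
    have hpos : (0:ℝ) < ((ℓ+1 : ℕ) : ℝ) := by positivity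
    have hG : G (ℓ+1) ≤ (L + ε/2) * ((ℓ:ℝ) + 1) := by
      have : G (ℓ+1) / ((ℓ+1 : ℕ) : ℝ) < L + ε/2 := hbℓ
      rw [div_lt_iff₀ hpos] at this
      push_cast at this ⊢
      linarith
    have hℓpos : (0:ℝ) < (ℓ : ℝ) := by exact_mod_cast hℓ1
    show F ℓ / (ℓ:ℝ) ≤ L + ε
    rw [div_le_iff₀ hℓpos]
    have h := h1 ℓ
    nlinarith
  · -- unbounded case
    have ha : ¬ IsBoundedUnder (· ≤ ·) atTop a := by
      intro ha
      exact hb (bdd_transfer G F C hC h2 ha)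
    have hea : {c : ℝ | ∀ᶠ n in atTop, a n ≤ c} = ∅ := by
      rw [eq_empty_iff_forall_notMem]
      intro c hc
      exact ha ⟨c, by rwa [eventually_map]⟩
    have heb : {c : ℝ | ∀ᶠ n in atTop, b n ≤ c} = ∅ := by
      rw [eq_empty_iff_forall_notMem]
      intro c hc
      exact hb ⟨c, by rwa [eventually_map]⟩
    rw [limsup_eq, limsup_eq, hea, heb]

/-- The asymptotic transverse expansion rate is constant on orbits: if there are groupoid
elements of word length `1` from `x` to `y` and from `y` to `x`, the word length satisfies
the (reverse) triangle inequalities under composition, `D` is a cocycle, and the derivative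
norms of word-length `≤ 1` elements are bounded by a constant `C`, then `e(x) = e(y)`. -/
theorem stmt_4 (q : ℕ) {T G : Type*} (s r : G → T) (wlen : G → ℕ)
    (D : G → (EuclideanSpace ℝ (Fin q) →L[ℝ] EuclideanSpace ℝ (Fin q))ˣ)
    (hfin : ∀ (z : T) (ℓ : ℕ), {γ : G | s γ = z ∧ wlen γ ≤ ℓ}.Finite)
    (hid : ∀ z : T, ∃ γ : G, s γ = z ∧ r γ = z ∧ wlen γ = 0 ∧ D γ = 1)
    (hcomp : ∀ γ δ : G, r δ = s γ → ∃ γδ : G, s γδ = s δ ∧ r γδ = r γ ∧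
      wlen γδ ≤ wlen γ + wlen δ ∧ wlen γ ≤ wlen γδ + wlen δ ∧ D γδ = D γ * D δ)
    (C : ℝ)
    (hC : ∀ γ : G, wlen γ ≤ 1 → germExpansion q (D γ) ≤ C)
    (x y : T)
    (hxy : ∃ γ : G, s γ = x ∧ r γ = y ∧ wlen γ = 1)
    (hyx : ∃ γ : G, s γ = y ∧ r γ = x ∧ wlen γ = 1) :
    expansionRate q s wlen D x = expansionRate q s wlen D y := by
  set S : T → ℕ → Set ℝ :=
    fun z ℓ => {v : ℝ | ∃ γ : G, s γ = z ∧ wlen γ ≤ ℓ ∧ v = germExpansion q (D γ)} with hS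
  set f : T → ℕ → ℝ := fun z ℓ => sSup (S z ℓ) with hf
  -- finiteness and basic facts
  have hSfin : ∀ z ℓ, (S z ℓ).Finite := by
    intro z ℓ
    have : S z ℓ = (fun γ => germExpansion q (D γ)) '' {γ : G | s γ = z ∧ wlen γ ≤ ℓ} := by
      ext v
      simp only [hS, mem_setOf_eq, mem_image]
      constructor
      · rintro ⟨γ, h1, h2, h3⟩; exact ⟨γ, ⟨h1, h2⟩, h3.symm⟩
      · rintro ⟨γ, ⟨h1, h2⟩, h3⟩; exact ⟨γ, h1, h2, h3.symm⟩
    rw [this]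
    exact (hfin z ℓ).image _
  have hmem0 : ∀ z ℓ, (0:ℝ) ∈ S z ℓ := by
    intro z ℓ
    obtain ⟨γ, h1, _, h3, h4⟩ := hid z
    exact ⟨γ, h1, le_trans h3.le (Nat.zero_le ℓ), by rw [h4, germExpansion_one]⟩
  have hfnonneg : ∀ z ℓ, 0 ≤ f z ℓ :=
    fun z ℓ => le_csSup (hSfin z ℓ).bddAbove (hmem0 z ℓ)
  have hC0 : 0 ≤ C := by
    obtain ⟨γ, _, _, h3, h4⟩ := hid x
    have := hC γ (le_trans h3.le (by norm_num))
    rwa [h4, germExpansion_one] at this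
  -- key estimate
  have key : ∀ (z w : T), (∃ δ : G, s δ = w ∧ r δ = z ∧ wlen δ = 1) →
      ∀ ℓ, f z ℓ ≤ f w (ℓ+1) + C := by
    intro z w ⟨δ, hδs, hδr, hδw⟩ ℓ
    apply csSup_le ⟨0, hmem0 z ℓ⟩
    rintro v ⟨γ, hγs, hγw, rfl⟩
    obtain ⟨γδ, h1, h2, h3, h4, h5⟩ := hcomp γ δ (by rw [hδr, hγs])
    have hDγ : D γ = D γδ * (D δ)⁻¹ := by
      rw [h5, mul_assoc, mul_inv_cancel, mul_one]
    have hmem : germExpansion q (D γδ) ∈ S w (ℓ+1) :=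
      ⟨γδ, by rw [h1, hδs], by omega, rfl⟩
    calc germExpansion q (D γ)
        ≤ germExpansion q (D γδ) + germExpansion q (D δ)⁻¹ := by
          rw [hDγ]; exact germExpansion_mul_le q _ _
      _ ≤ f w (ℓ+1) + C := by
          rw [germExpansion_inv]
          exact add_le_add (le_csSup (hSfin w (ℓ+1)).bddAbove hmem) (hC δ hδw.le)
  have hx : expansionRate q s wlen D x = limsup (fun ℓ : ℕ => f x ℓ / ℓ) atTop := rfl
  have hy : expansionRate q s wlen D y = limsup (fun ℓ : ℕ => f y ℓ / ℓ) atTop := rfl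
  rw [hx, hy]
  exact le_antisymm
    (aux_limsup _ _ (hfnonneg x) (hfnonneg y) C hC0 (key x y hyx) (key y x hxy))
    (aux_limsup _ _ (hfnonneg y) (hfnonneg x) C hC0 (key y x hxy) (key x y hyx))
end

section
/- Let f : U → ℝ^q be a C^1 map on an open set U ⊆ ℝ^q, and let Fix(f) = {x ∈ U : f(x) = x}. If x ∈ Fix(f) is a Lebesgue density point of Fix(f) (density 1), then the derivative D_x f is the identity map. Consequently, the set {x ∈ Fix(f) : D_x f ≠ Id} has Lebesgue measure zero. -/
open MeasureTheory Filter Set Metric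
open scoped ENNReal

theorem aux_density_deriv {q : ℕ} {s : Set (EuclideanSpace ℝ (Fin q))}
    {f : EuclideanSpace ℝ (Fin q) → EuclideanSpace ℝ (Fin q)}
    {x : EuclideanSpace ℝ (Fin q)} {A : EuclideanSpace ℝ (Fin q) →L[ℝ] EuclideanSpace ℝ (Fin q)}
    (hA : HasFDerivAt f A x) (hxf : f x = x) (hs : ∀ z ∈ s, f z = z)
    (hT : Tendsto (fun ρ : ℝ => volume (s ∩ Metric.ball x ρ) / volume (Metric.ball x ρ))
      (nhdsWithin 0 (Set.Ioi 0)) (nhds 1)) :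
    A = ContinuousLinearMap.id ℝ (EuclideanSpace ℝ (Fin q)) := by
  rcases subsingleton_or_nontrivial (EuclideanSpace ℝ (Fin q)) with hsub | hnt
  · exact ContinuousLinearMap.ext fun y => Subsingleton.elim _ _
  -- main claim : for unit vectors v, A v = v
  have key : ∀ v : EuclideanSpace ℝ (Fin q), ‖v‖ = 1 → A v = v := by
    intro v hv
    have hc : ∀ c : ℝ, 0 < c → ‖A v - v‖ ≤ c := by
      intro c hc
      have hApos : (0:ℝ) < ‖A‖ + 1 := by positivity
      set δ : ℝ := min (1/8) (c / (4 * (‖A‖ + 1))) with hδdef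
      have hδ0 : 0 < δ := lt_min (by norm_num) (by positivity)
      have hδ14 : δ ≤ 1/4 := (min_le_left _ _).trans (by norm_num)
      have hδc : (‖A‖ + 1) * δ ≤ c / 4 := by
        calc (‖A‖ + 1) * δ ≤ (‖A‖ + 1) * (c / (4 * (‖A‖ + 1))) :=
              mul_le_mul_of_nonneg_left (min_le_right _ _) hApos.le
          _ = c / 4 := by field_simp
      -- little-o bound
      have hlo := Asymptotics.isLittleO_iff.mp hA.isLittleO (show (0:ℝ) < c/4 by positivity)
      rw [Metric.eventually_nhds_iff] at hlo
      obtain ⟨r1, hr1, hlo⟩ := hlo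
      -- density : eventually the ratio is > 1 - κ
      set κ : ℝ≥0∞ := ENNReal.ofReal (δ ^ q) with hκdef
      have hκ0 : κ ≠ 0 := (ENNReal.ofReal_pos.mpr (pow_pos hδ0 q)).ne'
      have hlt : (1:ℝ≥0∞) - κ < 1 := ENNReal.sub_lt_self ENNReal.one_ne_top one_ne_zero hκ0
      have hEv := hT.eventually (eventually_gt_nhds hlt)
      have hIoo : ∀ᶠ r in nhdsWithin (0:ℝ) (Set.Ioi 0), r ∈ Set.Ioo 0 r1 :=
        Ioo_mem_nhdsGT_of_mem ⟨le_rfl, hr1⟩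
      obtain ⟨r, hrratio, hr0, hrr1⟩ := (hEv.and hIoo).exists
      -- the sector ball
      set m : EuclideanSpace ℝ (Fin q) := x + (r * (3/4)) • v with hm
      have hsubB : Metric.ball m (r * δ) ⊆ Metric.ball x r := by
        intro w hw
        rw [mem_ball] at hw ⊢
        have h1 : dist m x = r * (3/4) := by
          rw [dist_eq_norm, hm, add_sub_cancel_left, norm_smul, hv, Real.norm_eq_abs,
            abs_of_pos (by positivity), mul_one]
        calc dist w x ≤ dist w m + dist m x := dist_triangle _ _ _
          _ < r * δ + r * (3/4) := by rw [h1]; exact add_lt_add_left hw _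
          _ ≤ r := by nlinarith
      have hball : volume (Metric.ball m (r * δ)) = κ * volume (Metric.ball x r) := by
        rw [Measure.addHaar_ball _ _ (by positivity : (0:ℝ) ≤ r * δ),
          Measure.addHaar_ball _ _ hr0.le, finrank_euclideanSpace_fin, mul_pow,
          ENNReal.ofReal_mul (by positivity)]
        ring
      -- s must meet the sector ball
      have hmeet : ∃ z, z ∈ s ∧ z ∈ Metric.ball m (r * δ) := by
        by_contra hempty
        push_neg at hempty
        have h1 : s ∩ Metric.ball x r ⊆ Metric.ball x r \ Metric.ball m (r * δ) :=
          fun z hz => ⟨hz.2, fun hzm => hempty z hz.1 hzm⟩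
        have hμB0 : volume (Metric.ball x r) ≠ 0 := (measure_ball_pos _ _ hr0).ne'
        have hμBt : volume (Metric.ball x r) ≠ ⊤ := measure_ball_lt_top.ne
        have h2 : volume (s ∩ Metric.ball x r) / volume (Metric.ball x r) ≤ 1 - κ := by
          calc volume (s ∩ Metric.ball x r) / volume (Metric.ball x r)
              ≤ volume (Metric.ball x r \ Metric.ball m (r * δ)) / volume (Metric.ball x r) :=
                ENNReal.div_le_div_right (measure_mono h1) _
            _ = 1 - κ := by
                rw [measure_diff hsubB measurableSet_ball.nullMeasurableSet
                  measure_ball_lt_top.ne, hball]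
                rw [show volume (Metric.ball x r) - κ * volume (Metric.ball x r)
                    = (1 - κ) * volume (Metric.ball x r) by
                  rw [ENNReal.sub_mul (fun _ _ => hμBt), one_mul]]
                rw [mul_div_assoc, ENNReal.div_self hμB0 hμBt, mul_one]
        exact absurd hrratio (not_lt.mpr h2)
      obtain ⟨z, hzs, hzm⟩ := hmeet
      set u : EuclideanSpace ℝ (Fin q) := z - x with hu
      have h1 : ‖u - (r * (3/4)) • v‖ < r * δ := by
        have := mem_ball.mp hzm
        rw [dist_eq_norm, hm, sub_add_eq_sub_sub] at this
        exact this
      have hnv : ‖(r * (3/4)) • v‖ = r * (3/4) := by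
        rw [norm_smul, hv, Real.norm_eq_abs, abs_of_pos (by positivity), mul_one]
      have h2 : ‖u‖ ≤ r * (3/4) + r * δ := by
        calc ‖u‖ = ‖(r * (3/4)) • v + (u - (r * (3/4)) • v)‖ := by rw [add_sub_cancel]
          _ ≤ ‖(r * (3/4)) • v‖ + ‖u - (r * (3/4)) • v‖ := norm_add_le _ _
          _ ≤ r * (3/4) + r * δ := by rw [hnv]; exact add_le_add_right h1.le _
      have hur : ‖u‖ ≤ r := by nlinarith
      have h3 : dist z x < r1 := by
        rw [dist_eq_norm]
        calc ‖z - x‖ ≤ r := hur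
          _ < r1 := hrr1
      have h4 : ‖u - A u‖ ≤ c/4 * r := by
        have := hlo h3
        rw [hs z hzs, hxf] at this
        calc ‖u - A u‖ = ‖z - x - A (z - x)‖ := rfl
          _ ≤ c/4 * ‖z - x‖ := this
          _ ≤ c/4 * r := by
              apply mul_le_mul_of_nonneg_left _ (by positivity)
              exact hur
      clear_value u
      have hB : ∀ w : EuclideanSpace ℝ (Fin q), ‖w - A w‖ ≤ (‖A‖ + 1) * ‖w‖ := by
        intro w
        calc ‖w - A w‖ ≤ ‖w‖ + ‖A w‖ := norm_sub_le _ _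
          _ ≤ ‖w‖ + ‖A‖ * ‖w‖ := add_le_add_right (A.le_opNorm w) _
          _ = (‖A‖ + 1) * ‖w‖ := by ring
      have h5 : r * (3/4) * ‖A v - v‖ ≤ c/4 * r + (‖A‖ + 1) * (r * δ) := by
        have heq : (r * (3/4)) • v - A ((r * (3/4)) • v)
            = (u - A u) - ((u - (r * (3/4)) • v) - A (u - (r * (3/4)) • v)) := by
          rw [map_sub]; abel
        have hl : ‖(r * (3/4)) • v - A ((r * (3/4)) • v)‖ = r * (3/4) * ‖A v - v‖ := by
          rw [A.map_smul, ← smul_sub, norm_smul, Real.norm_eq_abs, abs_of_pos (by positivity),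
            norm_sub_rev]
        calc r * (3/4) * ‖A v - v‖ = ‖(r * (3/4)) • v - A ((r * (3/4)) • v)‖ := hl.symm
          _ ≤ ‖u - A u‖ + ‖(u - (r * (3/4)) • v) - A (u - (r * (3/4)) • v)‖ := by
              rw [heq]; exact norm_sub_le _ _
          _ ≤ c/4 * r + (‖A‖ + 1) * ‖u - (r * (3/4)) • v‖ := add_le_add h4 (hB _)
          _ ≤ c/4 * r + (‖A‖ + 1) * (r * δ) := by
              exact add_le_add_right (mul_le_mul_of_nonneg_left h1.le hApos.le) _
      have h6 : (‖A‖ + 1) * (r * δ) ≤ c/4 * r := by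
        calc (‖A‖ + 1) * (r * δ) = ((‖A‖ + 1) * δ) * r := by ring
          _ ≤ c/4 * r := mul_le_mul_of_nonneg_right hδc hr0.le
      nlinarith [norm_nonneg (A v - v), h5, h6, hr0]
    have h0 : ‖A v - v‖ ≤ 0 := le_of_forall_pos_le_add (by simpa using fun c h => hc c h)
    have := norm_le_zero_iff.mp h0
    rwa [sub_eq_zero] at this
  refine ContinuousLinearMap.ext fun y => ?_
  rcases eq_or_ne y 0 with rfl | hy
  · simp
  · have hny : (0:ℝ) < ‖y‖ := norm_pos_iff.mpr hy
    have := key (‖y‖⁻¹ • y) (by rw [norm_smul, Real.norm_eq_abs, abs_of_pos (by positivity),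
      inv_mul_cancel₀ hny.ne'])
    rw [A.map_smul] at this
    have h2 : A y = y := by
      have := congrArg (fun w => ‖y‖ • w) this
      simpa [smul_smul, mul_inv_cancel₀ hny.ne'] using this
    simpa using h2

/-- Let `f : U → ℝ^q` be `C¹` on an open set `U ⊆ ℝ^q` and `Fix(f) = {x ∈ U : f x = x}`.
If `x ∈ Fix(f)` is a Lebesgue density point of `Fix(f)`, then `D_x f = Id`.
Consequently, `{x ∈ Fix(f) : D_x f ≠ Id}` has Lebesgue measure zero. -/
theorem stmt_7 {q : ℕ} (U : Set (EuclideanSpace ℝ (Fin q))) (hU : IsOpen U)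
    (f : EuclideanSpace ℝ (Fin q) → EuclideanSpace ℝ (Fin q))
    (hf : ContDiffOn ℝ 1 f U) :
    (∀ x ∈ U, f x = x →
      Filter.Tendsto
        (fun ρ : ℝ =>
          volume ({z ∈ U | f z = z} ∩ Metric.ball x ρ) / volume (Metric.ball x ρ))
        (nhdsWithin 0 (Set.Ioi 0)) (nhds 1) →
      fderiv ℝ f x = ContinuousLinearMap.id ℝ (EuclideanSpace ℝ (Fin q))) ∧
    volume {x ∈ U | f x = x ∧
      fderiv ℝ f x ≠ ContinuousLinearMap.id ℝ (EuclideanSpace ℝ (Fin q))} = 0 := by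
  set s : Set (EuclideanSpace ℝ (Fin q)) := {z ∈ U | f z = z} with hsdef
  have part1 : ∀ x ∈ U, f x = x →
      Filter.Tendsto
        (fun ρ : ℝ => volume (s ∩ Metric.ball x ρ) / volume (Metric.ball x ρ))
        (nhdsWithin 0 (Set.Ioi 0)) (nhds 1) →
      fderiv ℝ f x = ContinuousLinearMap.id ℝ (EuclideanSpace ℝ (Fin q)) := by
    intro x hx hxf hT
    have hdiff : DifferentiableAt ℝ f x :=
      (hf.differentiableOn one_ne_zero).differentiableAt (hU.mem_nhds hx)
    exact aux_density_deriv hdiff.hasFDerivAt hxf (fun z hz => hz.2) hT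
  refine ⟨part1, ?_⟩
  -- measurability of s
  have hscl : s = U ∩ closure s := by
    apply Subset.antisymm
    · exact fun z hz => ⟨hz.1, subset_closure hz⟩
    · rintro z ⟨hzU, hzc⟩
      refine ⟨hzU, ?_⟩
      haveI : (nhdsWithin z s).NeBot := mem_closure_iff_nhdsWithin_neBot.mp hzc
      have hg : Tendsto (fun w => f w - w) (nhdsWithin z s) (nhds (f z - z)) :=
        (((hf.continuousOn.continuousAt (hU.mem_nhds hzU)).sub
          continuous_id.continuousAt).continuousWithinAt).tendsto
      have h0 : Tendsto (fun w => f w - w) (nhdsWithin z s) (nhds 0) := by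
        apply tendsto_const_nhds.congr'
        filter_upwards [self_mem_nhdsWithin] with w hw
        simp [hw.2]
      have := tendsto_nhds_unique h0 hg
      have : f z = z := by
        have h := this.symm
        rwa [sub_eq_zero] at h
      exact this
  have hsm : MeasurableSet s := by
    rw [hscl]; exact hU.measurableSet.inter isClosed_closure.measurableSet
  rcases subsingleton_or_nontrivial (EuclideanSpace ℝ (Fin q)) with hsub | hnt
  · have : {x ∈ U | f x = x ∧
        fderiv ℝ f x ≠ ContinuousLinearMap.id ℝ (EuclideanSpace ℝ (Fin q))} = ∅ := by
      ext x
      simp only [mem_setOf_eq, mem_empty_iff_false, iff_false, not_and]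
      intro _ _ h
      exact h (ContinuousLinearMap.ext fun y => Subsingleton.elim _ _)
    rw [this]; exact measure_empty
  -- Besicovitch density theorem, converted to balls
  have hbes : ∀ᵐ x ∂(volume.restrict s),
      Tendsto (fun ρ : ℝ => volume (s ∩ Metric.ball x ρ) / volume (Metric.ball x ρ))
        (nhdsWithin 0 (Set.Ioi 0)) (nhds 1) := by
    filter_upwards [Besicovitch.ae_tendsto_measure_inter_div volume s] with x hx
    apply hx.congr'
    filter_upwards [self_mem_nhdsWithin] with r (hr : (0:ℝ) < r)
    have hcb : volume (Metric.closedBall x r) = volume (Metric.ball x r) :=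
      Measure.addHaar_closedBall_eq_addHaar_ball volume x r
    have hscb : volume (s ∩ Metric.closedBall x r) = volume (s ∩ Metric.ball x r) := by
      apply le_antisymm
      · calc volume (s ∩ Metric.closedBall x r)
            ≤ volume ((s ∩ Metric.ball x r) ∪ Metric.sphere x r) := by
              apply measure_mono
              rintro w ⟨hws, hwc⟩
              rw [← ball_union_sphere] at hwc
              rcases hwc with h | h
              · exact Or.inl ⟨hws, h⟩
              · exact Or.inr h
          _ ≤ volume (s ∩ Metric.ball x r) + volume (Metric.sphere x r) := measure_union_le _ _
          _ = volume (s ∩ Metric.ball x r) := by rw [Measure.addHaar_sphere, add_zero]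
      · exact measure_mono (inter_subset_inter_right _ ball_subset_closedBall)
    rw [hscb, hcb]
  -- conclude
  have hsubset : {x ∈ U | f x = x ∧
      fderiv ℝ f x ≠ ContinuousLinearMap.id ℝ (EuclideanSpace ℝ (Fin q))}
      ⊆ {x | ¬ Tendsto (fun ρ : ℝ => volume (s ∩ Metric.ball x ρ) / volume (Metric.ball x ρ))
          (nhdsWithin 0 (Set.Ioi 0)) (nhds 1)} ∩ s := by
    rintro x ⟨hxU, hxf, hxd⟩
    exact ⟨fun hT => hxd (part1 x hxU hxf hT), hxU, hxf⟩
  refine le_antisymm ?_ zero_le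
  calc volume {x ∈ U | f x = x ∧
        fderiv ℝ f x ≠ ContinuousLinearMap.id ℝ (EuclideanSpace ℝ (Fin q))}
      ≤ volume ({x | ¬ Tendsto (fun ρ : ℝ => volume (s ∩ Metric.ball x ρ) / volume (Metric.ball x ρ))
          (nhdsWithin 0 (Set.Ioi 0)) (nhds 1)} ∩ s) := measure_mono hsubset
    _ = (volume.restrict s) {x | ¬ Tendsto (fun ρ : ℝ => volume (s ∩ Metric.ball x ρ) / volume (Metric.ball x ρ))
          (nhdsWithin 0 (Set.Ioi 0)) (nhds 1)} := (Measure.restrict_apply' hsm).symm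
    _ = 0 := hbes
end

section
/- (Goodman–Plante) Let G be a finitely generated pseudogroup on a compact metric space T and suppose an orbit O(x) admits a Følner sequence S_ℓ (finite increasing sets exhausting the orbit with #∂S_ℓ/#S_ℓ → 0). Then any weak-* limit of the averaging measures μ_ℓ = (1/#S_ℓ)Σ_{y∈S_ℓ} δ_y is a G-invariant Borel probability measure supported in the closure of O(x). -/
open MeasureTheory Set Filter

/-- One step of the pseudogroup generated by the partial maps `g i : Dom i → T`. -/
def pgStep {T I : Type*} (Dom : I → Set T) (g : I → T → T) (a b : T) : Prop :=
  ∃ i, a ∈ Dom i ∧ g i a = b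

/-- `b` is reachable from `a` by at most `n` generators. -/
def pgReachIn {T I : Type*} (Dom : I → Set T) (g : I → T → T) : ℕ → T → T → Prop
  | 0, a, b => a = b
  | (n + 1), a, b => pgReachIn Dom g n a b ∨ ∃ z, pgReachIn Dom g n a z ∧ pgStep Dom g z b

/-- The orbit of `x`. -/
def pgOrbit {T I : Type*} (Dom : I → Set T) (g : I → T → T) (x : T) : Set T :=
  {y | ∃ n, pgReachIn Dom g n x y}

/-- Two points of an orbit at word distance `1`. -/
def pgAdj {T I : Type*} (Dom : I → Set T) (g : I → T → T) (a b : T) : Prop :=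
  a ≠ b ∧ (pgStep Dom g a b ∨ pgStep Dom g b a)

/-- The boundary `∂S = {z ∈ S : d(z,O∖S) = 1} ∪ {z ∈ O∖S : d(z,S) = 1}` of a subset `S`
of the orbit `O` of `x`. -/
def pgBoundary {T I : Type*} (Dom : I → Set T) (g : I → T → T) (x : T) (S : Set T) :
    Set T :=
  {z ∈ pgOrbit Dom g x |
    (z ∈ S ∧ ∃ w ∈ pgOrbit Dom g x, w ∉ S ∧ pgAdj Dom g z w) ∨
    (z ∉ S ∧ ∃ w ∈ S, pgAdj Dom g z w)}

/-- Applying a generator to a point of the orbit stays in the orbit. -/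
lemma pg_orbit_step {T I : Type*} {Dom : I → Set T} {g : I → T → T} {x : T} {y : T}
    (hy : y ∈ pgOrbit Dom g x) {i : I} (hd : y ∈ Dom i) : g i y ∈ pgOrbit Dom g x := by
  obtain ⟨n, h⟩ := hy
  exact ⟨n + 1, Or.inr ⟨y, h, i, hd, rfl⟩⟩

/-- The boundary of a finite set is finite. -/
lemma pg_boundary_finite {T I : Type*} [Finite I] (Dom : I → Set T) (g : I → T → T) (x : T)
    (hinj : ∀ i, Set.InjOn (g i) (Dom i)) (S : Finset T) :
    (pgBoundary Dom g x ↑S).Finite := by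
  have hsub : pgBoundary Dom g x ↑S ⊆
      ↑S ∪ ⋃ (j : I), (g j '' (Dom j ∩ ↑S) ∪
        ⋃ w ∈ (↑S : Set T), {z | z ∈ Dom j ∧ g j z = w}) := by
    rintro z ⟨horb, hcase⟩
    rcases hcase with ⟨hzS, -⟩ | ⟨hzS, w, hwS, hne, hstep | hstep⟩
    · exact Or.inl hzS
    · obtain ⟨j, hzD, hgz⟩ := hstep
      exact Or.inr (mem_iUnion.2 ⟨j, Or.inr (mem_iUnion₂.2 ⟨w, hwS, hzD, hgz⟩)⟩)
    · obtain ⟨j, hwD, hgw⟩ := hstep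
      exact Or.inr (mem_iUnion.2 ⟨j, Or.inl ⟨w, ⟨hwD, hwS⟩, hgw⟩⟩)
  refine Set.Finite.subset (Set.Finite.union S.finite_toSet
    (Set.finite_iUnion fun j => Set.Finite.union ?_ ?_)) hsub
  · exact ((S.finite_toSet.inter_of_right _)).image _
  · refine Set.Finite.biUnion S.finite_toSet fun w _ => ?_
    apply Set.Subsingleton.finite
    rintro a ⟨haD, hga⟩ b ⟨hbD, hgb⟩
    exact hinj j haD hbD (hga.trans hgb.symm)

/-- The key Følner counting estimate:  if `ψ` is supported in `K' ⊆ Dom i`, `ψ ≤ 1`,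
`g i` maps `K'` into `V`, and `χ ≥ 1` on `V`, `χ ≥ 0`, then the sum of `ψ` over a finite
subset `S` of the orbit is bounded by the sum of `χ` plus the size of the boundary. -/
lemma pg_count {T I : Type*} [Finite I] (Dom : I → Set T) (g : I → T → T) (x : T)
    (hinj : ∀ i, Set.InjOn (g i) (Dom i)) (i : I) (S : Finset T)
    (hSorb : (S : Set T) ⊆ pgOrbit Dom g x)
    (ψ χ : T → ℝ) (K' V : Set T)
    (hK'D : K' ⊆ Dom i) (himg : ∀ y ∈ K', g i y ∈ V)
    (hψ0 : ∀ y, y ∉ K' → ψ y = 0) (hψ1 : ∀ y, ψ y ≤ 1)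
    (hχ0 : ∀ y, 0 ≤ χ y) (hχ1 : ∀ y ∈ V, 1 ≤ χ y) :
    ∑ y ∈ S, ψ y ≤ ∑ y ∈ S, χ y + ((pgBoundary Dom g x ↑S).ncard : ℝ) := by
  classical
  set Sk := S.filter (fun y => y ∈ K') with hSkdef
  have hK'mem : ∀ y ∈ Sk, y ∈ K' ∧ y ∈ S := by
    intro y hy
    rw [hSkdef, Finset.mem_filter] at hy
    exact ⟨hy.2, hy.1⟩
  have h1 : ∑ y ∈ S, ψ y = ∑ y ∈ Sk, ψ y := by
    rw [hSkdef]
    exact (Finset.sum_filter_of_ne (fun y _ hy => by_contra fun hK => hy (hψ0 y hK))).symm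
  have h2 : ∑ y ∈ Sk, ψ y ≤ (Sk.card : ℝ) := by
    calc ∑ y ∈ Sk, ψ y ≤ ∑ _y ∈ Sk, (1 : ℝ) := Finset.sum_le_sum fun y _ => hψ1 y
    _ = (Sk.card : ℝ) := by simp
  set A := Sk.filter (fun y => g i y ∈ S) with hAdef
  set B := Sk.filter (fun y => g i y ∉ S) with hBdef
  have hABcard : A.card + B.card = Sk.card :=
    Finset.card_filter_add_card_filter_not _
  have hAcard : (A.card : ℝ) ≤ ∑ y ∈ S, χ y := by
    have hinjA : Set.InjOn (g i) ↑A := (hinj i).mono (fun y hy =>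
      hK'D (hK'mem y (Finset.mem_filter.1 hy).1).1)
    have himA : A.image (g i) ⊆ S.filter (fun z => z ∈ V) := by
      intro z hz
      obtain ⟨y, hyA, rfl⟩ := Finset.mem_image.1 hz
      obtain ⟨hySk, hgS⟩ := Finset.mem_filter.1 hyA
      exact Finset.mem_filter.2 ⟨hgS, himg y (hK'mem y hySk).1⟩
    calc (A.card : ℝ) = ((A.image (g i)).card : ℝ) := by
          rw [Finset.card_image_of_injOn hinjA]
    _ ≤ ((S.filter (fun z => z ∈ V)).card : ℝ) := by
          exact_mod_cast Finset.card_le_card himA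
    _ ≤ ∑ z ∈ S.filter (fun z => z ∈ V), χ z := by
          rw [Finset.card_eq_sum_ones]
          push_cast
          exact Finset.sum_le_sum fun z hz => hχ1 z (Finset.mem_filter.1 hz).2
    _ ≤ ∑ z ∈ S, χ z :=
          Finset.sum_le_sum_of_subset_of_nonneg (Finset.filter_subset _ _)
            (fun z _ _ => hχ0 z)
  have hBbd : ∀ y ∈ B, y ∈ pgBoundary Dom g x ↑S := by
    intro y hyB
    obtain ⟨hySk, hgnS⟩ := Finset.mem_filter.1 hyB
    obtain ⟨hyK', hyS⟩ := hK'mem y hySk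
    have hyD : y ∈ Dom i := hK'D hyK'
    have hyorb : y ∈ pgOrbit Dom g x := hSorb hyS
    have hgorb : g i y ∈ pgOrbit Dom g x := pg_orbit_step hyorb hyD
    have hne : y ≠ g i y := fun h => hgnS (h ▸ hyS)
    exact ⟨hyorb, Or.inl ⟨hyS, g i y, hgorb, (fun h => hgnS h),
      ⟨hne, Or.inl ⟨i, hyD, rfl⟩⟩⟩⟩
  have hBcard : (B.card : ℝ) ≤ ((pgBoundary Dom g x ↑S).ncard : ℝ) := by
    have hfin := pg_boundary_finite Dom g x hinj S
    have hle : (↑B : Set T).ncard ≤ (pgBoundary Dom g x ↑S).ncard :=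
      Set.ncard_le_ncard (fun y hy => hBbd y hy) hfin
    rw [Set.ncard_coe_finset] at hle
    exact_mod_cast hle
  calc ∑ y ∈ S, ψ y = ∑ y ∈ Sk, ψ y := h1
  _ ≤ (Sk.card : ℝ) := h2
  _ = (A.card : ℝ) + (B.card : ℝ) := by exact_mod_cast congrArg (Nat.cast (R := ℝ)) hABcard.symm
  _ ≤ ∑ y ∈ S, χ y + ((pgBoundary Dom g x ↑S).ncard : ℝ) := add_le_add hAcard hBcard

/-- (Goodman–Plante) Let `G` be a finitely generated pseudogroup on a compact metric
space `T` and suppose the orbit `O(x)` admits a Følner sequence `S_ℓ` (finite increasing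
sets exhausting the orbit with `#∂S_ℓ/#S_ℓ → 0`).  Then any weak-* limit of the averaging
measures `μ_ℓ = (1/#S_ℓ) Σ_{y∈S_ℓ} δ_y` is a `G`-invariant Borel probability measure
supported in the closure of `O(x)`. -/
theorem stmt_11 {T : Type*} [MetricSpace T] [CompactSpace T]
    [MeasurableSpace T] [BorelSpace T]
    {I : Type*} [Finite I]
    (Dom : I → Set T) (g : I → T → T)
    (hopen : ∀ i, IsOpen (Dom i))
    (hcont : ∀ i, ContinuousOn (g i) (Dom i))
    (hinj : ∀ i, Set.InjOn (g i) (Dom i))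
    (hsym : ∀ i, ∀ z ∈ Dom i, ∃ j, g i z ∈ Dom j ∧ g j (g i z) = z)
    (x : T)
    (S : ℕ → Finset T)
    (hSne : ∀ ℓ, (S ℓ).Nonempty)
    (hSorb : ∀ ℓ, (S ℓ : Set T) ⊆ pgOrbit Dom g x)
    (hSmono : ∀ ℓ, S ℓ ⊆ S (ℓ + 1))
    (hSexh : ∀ y ∈ pgOrbit Dom g x, ∃ ℓ, y ∈ S ℓ)
    (hSfolner : Filter.Tendsto
      (fun ℓ : ℕ => ((pgBoundary Dom g x (S ℓ)).ncard : ℝ) / ((S ℓ).card : ℝ))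
      atTop (nhds 0))
    (φ : ℕ → ℕ) (hφ : StrictMono φ)
    (μstar : Measure T)
    (hweak : ∀ f : C(T, ℝ), Filter.Tendsto
      (fun n : ℕ => (((S (φ n)).card : ℝ))⁻¹ * ∑ y ∈ S (φ n), f y)
      atTop (nhds (∫ z, f z ∂μstar))) :
    IsProbabilityMeasure μstar ∧
    (∀ i, ∀ E : Set T, MeasurableSet E → E ⊆ Dom i → μstar (g i '' E) = μstar E) ∧
    μstar (closure (pgOrbit Dom g x))ᶜ = 0 := by
  classical
  haveI : SecondCountableTopology T := by infer_instance
  haveI : PolishSpace T := by infer_instance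
  have hcard_pos : ∀ n : ℕ, (0 : ℝ) < ((S (φ n)).card : ℝ) := fun n => by
    exact_mod_cast Finset.card_pos.2 (hSne (φ n))
  -- Part 1 : probability measure
  have hone : (μstar univ).toReal = 1 := by
    have h1 := hweak 1
    have hconst : ∀ n : ℕ,
        (((S (φ n)).card : ℝ))⁻¹ * ∑ y ∈ S (φ n), (1 : C(T, ℝ)) y = 1 := by
      intro n
      have : ∑ y ∈ S (φ n), (1 : C(T, ℝ)) y = ((S (φ n)).card : ℝ) := by simp
      rw [this]
      exact inv_mul_cancel₀ (hcard_pos n).ne'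
    have h2 : Filter.Tendsto
        (fun n : ℕ => (((S (φ n)).card : ℝ))⁻¹ * ∑ y ∈ S (φ n), (1 : C(T, ℝ)) y)
        atTop (nhds 1) :=
      Tendsto.congr (fun n => (hconst n).symm) tendsto_const_nhds
    have h3 : ∫ z, (1 : C(T, ℝ)) z ∂μstar = 1 := tendsto_nhds_unique h1 h2
    simpa [integral_const, smul_eq_mul, measureReal_def] using h3
  have hprob : IsProbabilityMeasure μstar := ⟨(ENNReal.toReal_eq_one_iff _).mp hone⟩
  haveI := hprob
  have hint : ∀ f : C(T, ℝ), Integrable (⇑f) μstar := fun f =>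
    f.continuous.integrable_of_hasCompactSupport (HasCompactSupport.of_compactSpace _)
  -- lower bound for integrals
  have hlow : ∀ (f : C(T, ℝ)) (L : Set T), MeasurableSet L → (∀ z ∈ L, 1 ≤ f z) →
      (∀ z, 0 ≤ f z) → (μstar L).toReal ≤ ∫ z, f z ∂μstar := by
    intro f L hL h1 h0
    have hmono : ∫ z, L.indicator (fun _ => (1 : ℝ)) z ∂μstar ≤ ∫ z, f z ∂μstar := by
      apply integral_mono ((integrable_const (1 : ℝ)).indicator hL) (hint f)
      intro z
      by_cases hz : z ∈ L
      · simpa [Set.indicator_of_mem hz] using h1 z hz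
      · simpa [Set.indicator_of_notMem hz] using h0 z
    calc (μstar L).toReal = ∫ z, L.indicator 1 z ∂μstar := (integral_indicator_one hL).symm
    _ ≤ ∫ z, f z ∂μstar := hmono
  -- upper bound for integrals
  have hup : ∀ (f : C(T, ℝ)) (U : Set T), MeasurableSet U → (∀ z, f z ≤ 1) →
      (∀ z, z ∉ U → f z ≤ 0) → ∫ z, f z ∂μstar ≤ (μstar U).toReal := by
    intro f U hU h1 h0
    have hmono : ∫ z, f z ∂μstar ≤ ∫ z, U.indicator (fun _ => (1 : ℝ)) z ∂μstar := by
      apply integral_mono (hint f) ((integrable_const (1 : ℝ)).indicator hU)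
      intro z
      by_cases hz : z ∈ U
      · simpa [Set.indicator_of_mem hz] using h1 z
      · simpa [Set.indicator_of_notMem hz] using h0 z hz
    calc ∫ z, f z ∂μstar ≤ ∫ z, U.indicator 1 z ∂μstar := hmono
    _ = (μstar U).toReal := integral_indicator_one hU
  -- Part 3 : support
  have horb_x : x ∈ pgOrbit Dom g x := ⟨0, rfl⟩
  set F := closure (pgOrbit Dom g x) with hFdef
  have hFc : IsClosed F := isClosed_closure
  have hFne : F.Nonempty := ⟨x, subset_closure horb_x⟩
  have hCk_closed : ∀ k : ℕ, IsClosed {z : T | 1 / ((k : ℝ) + 1) ≤ Metric.infDist z F} :=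
    fun k => isClosed_le continuous_const (Metric.continuous_infDist_pt F)
  have hCk_null : ∀ k : ℕ, μstar {z : T | 1 / ((k : ℝ) + 1) ≤ Metric.infDist z F} = 0 := by
    intro k
    have hdisj : Disjoint F {z : T | 1 / ((k : ℝ) + 1) ≤ Metric.infDist z F} := by
      rw [Set.disjoint_left]
      intro z hzF hzC
      have hz0 : Metric.infDist z F = 0 := Metric.infDist_zero_of_mem hzF
      rw [Set.mem_setOf_eq, hz0] at hzC
      have : (0 : ℝ) < 1 / ((k : ℝ) + 1) := by positivity
      linarith
    obtain ⟨f, hf0, hf1, hf01⟩ :=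
      exists_continuous_zero_one_of_isClosed hFc (hCk_closed k) hdisj
    have hi : ∫ z, f z ∂μstar = 0 := by
      refine tendsto_nhds_unique (hweak f) ?_
      have hzero : ∀ n : ℕ, (((S (φ n)).card : ℝ))⁻¹ * ∑ y ∈ S (φ n), f y = 0 := by
        intro n
        rw [Finset.sum_eq_zero, mul_zero]
        intro y hy
        exact hf0 (subset_closure (hSorb (φ n) hy))
      exact Tendsto.congr (fun n => (hzero n).symm) tendsto_const_nhds
    have hle := hlow f _ (hCk_closed k).measurableSet
      (fun z hz => le_of_eq (hf1 hz).symm) (fun z => (hf01 z).1)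
    rw [hi] at hle
    have h0 : (μstar {z : T | 1 / ((k : ℝ) + 1) ≤ Metric.infDist z F}).toReal = 0 :=
      le_antisymm hle ENNReal.toReal_nonneg
    exact ((ENNReal.toReal_eq_zero_iff _).mp h0).resolve_right (measure_ne_top μstar _)
  have hsupp : μstar Fᶜ = 0 := by
    have hsub : Fᶜ ⊆ ⋃ k : ℕ, {z : T | 1 / ((k : ℝ) + 1) ≤ Metric.infDist z F} := by
      intro z hz
      have hpos : 0 < Metric.infDist z F := (hFc.notMem_iff_infDist_pos hFne).1 hz
      obtain ⟨k, hk⟩ := exists_nat_one_div_lt hpos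
      exact mem_iUnion.2 ⟨k, le_of_lt hk⟩
    exact measure_mono_null hsub (measure_iUnion_null hCk_null)
  -- Part 2 : invariance.  First the key inequality for compact sets.
  have hstar : ∀ (i : I) (L : Set T), IsCompact L → L ⊆ Dom i →
      μstar L ≤ μstar (g i '' L) := by
    intro i L hLc hLD
    have hCc : IsCompact (g i '' L) := hLc.image_of_continuousOn ((hcont i).mono hLD)
    refine ENNReal.le_of_forall_pos_le_add fun ε hε _ => ?_
    have hlt : μstar (g i '' L) < μstar (g i '' L) + ε :=
      ENNReal.lt_add_right (measure_ne_top _ _) (by exact_mod_cast hε.ne')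
    obtain ⟨V₂, hCV₂, hV₂o, hV₂lt⟩ := Set.exists_isOpen_lt_of_lt _ _ hlt
    obtain ⟨Km, hKmc, hCKm, hKmV₂⟩ := exists_compact_between hCc hV₂o hCV₂
    have hPopen : IsOpen (Dom i ∩ g i ⁻¹' interior Km) :=
      (hcont i).isOpen_inter_preimage (hopen i) isOpen_interior
    have hLP : L ⊆ Dom i ∩ g i ⁻¹' interior Km := fun z hz =>
      ⟨hLD hz, hCKm (Set.mem_image_of_mem _ hz)⟩
    obtain ⟨K', hK'c, hLK', hK'P⟩ := exists_compact_between hLc hPopen hLP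
    obtain ⟨ψ, hψ0, hψ1, hψ01⟩ :=
      exists_continuous_zero_one_of_isClosed
        (isClosed_compl_iff.2 isOpen_interior : IsClosed (interior K')ᶜ)
        hLc.isClosed (disjoint_compl_left_iff_subset.2 hLK')
    obtain ⟨χ, hχ0, hχ1, hχ01⟩ :=
      exists_continuous_zero_one_of_isClosed
        (isClosed_compl_iff.2 hV₂o) hKmc.isClosed
        (disjoint_compl_left_iff_subset.2 hKmV₂)
    have hcount : ∀ n : ℕ,
        (((S (φ n)).card : ℝ))⁻¹ * ∑ y ∈ S (φ n), ψ y ≤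
        (((S (φ n)).card : ℝ))⁻¹ * ∑ y ∈ S (φ n), χ y +
          ((pgBoundary Dom g x ↑(S (φ n))).ncard : ℝ) / ((S (φ n)).card : ℝ) := by
      intro n
      have h := pg_count Dom g x hinj i (S (φ n)) (hSorb (φ n)) ψ χ K' (interior Km)
        (fun z hz => (hK'P hz).1) (fun y hy => (hK'P hy).2)
        (fun y hy => hψ0 (fun hN => hy (interior_subset hN)))
        (fun y => (hψ01 y).2) (fun y => (hχ01 y).1)
        (fun y hy => le_of_eq (hχ1 (interior_subset hy)).symm)
      rw [div_eq_inv_mul, ← mul_add]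
      exact mul_le_mul_of_nonneg_left h (inv_nonneg.2 (hcard_pos n).le)
    have hfol : Filter.Tendsto
        (fun n : ℕ => ((pgBoundary Dom g x ↑(S (φ n))).ncard : ℝ) / ((S (φ n)).card : ℝ))
        atTop (nhds 0) := hSfolner.comp hφ.tendsto_atTop
    have hlim : (∫ z, ψ z ∂μstar) ≤ (∫ z, χ z ∂μstar) + 0 :=
      le_of_tendsto_of_tendsto' (hweak ψ) ((hweak χ).add hfol) hcount
    rw [add_zero] at hlim
    have h1 := hlow ψ L hLc.isClosed.measurableSet
      (fun z hz => le_of_eq (hψ1 hz).symm) (fun z => (hψ01 z).1)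
    have h2 := hup χ V₂ hV₂o.measurableSet (fun z => (hχ01 z).2)
      (fun z hz => le_of_eq (hχ0 hz))
    have hreal : (μstar L).toReal ≤ (μstar V₂).toReal := by linarith
    exact le_trans
      ((ENNReal.toReal_le_toReal (measure_ne_top _ _) (measure_ne_top _ _)).1 hreal)
      hV₂lt.le
  -- the inequality for measurable sets
  have hA : ∀ (i : I) (E : Set T), MeasurableSet E → E ⊆ Dom i →
      μstar E ≤ μstar (g i '' E) := by
    intro i E hE hED
    rw [hE.measure_eq_iSup_isCompact μstar]
    refine iSup_le fun K => iSup_le fun hKE => iSup_le fun hKc => ?_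
    exact le_trans (hstar i K hKc (hKE.trans hED))
      (measure_mono (Set.image_mono hKE))
  -- measurable embeddings for each generator
  have hemb : ∀ j : I, MeasurableEmbedding ((Dom j).restrict (g j)) := fun j =>
    (hcont j).measurableEmbedding (hopen j).measurableSet (hinj j)
  have himg_meas : ∀ (j : I) (E : Set T), MeasurableSet E → E ⊆ Dom j →
      MeasurableSet (g j '' E) := by
    intro j E hE hED
    have heq : g j '' E = (Dom j).restrict (g j) '' (Subtype.val ⁻¹' E) := by
      rw [show (Dom j).restrict (g j) = (Dom j).domRestrict (g j) from rfl, Set.image_restrict, Set.inter_eq_self_of_subset_left hED]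
    rw [heq]
    exact (hemb j).measurableSet_image.2 (measurable_subtype_coe hE)
  -- measurability of the graph of each generator
  have hgraph : ∀ j : I, MeasurableSet {p : T × T | p.1 ∈ Dom j ∧ g j p.1 = p.2} := by
    intro j
    have hq : Continuous (fun s : (Dom j) => ((s : T), g j s)) :=
      continuous_subtype_val.prodMk ((hcont j).restrict)
    have hqi : Function.Injective (fun s : (Dom j) => ((s : T), g j s)) :=
      fun a b h => Subtype.ext (congrArg Prod.fst h)
    haveI : PolishSpace (Dom j) := (hopen j).polishSpace
    have hqe : MeasurableEmbedding (fun s : (Dom j) => ((s : T), g j s)) :=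
      hq.measurableEmbedding hqi
    have hre : {p : T × T | p.1 ∈ Dom j ∧ g j p.1 = p.2} =
        Set.range (fun s : (Dom j) => ((s : T), g j s)) := by
      ext ⟨a, b⟩
      constructor
      · rintro ⟨had, hgb⟩
        exact ⟨⟨a, had⟩, by simp [hgb]⟩
      · rintro ⟨⟨a', ha'⟩, hs⟩
        rw [Prod.mk.injEq] at hs
        obtain ⟨rfl, rfl⟩ := hs
        exact ⟨ha', rfl⟩
    rw [hre]
    exact hqe.measurableSet_range
  -- measurability of the pieces where a given generator inverts g i
  have hPmeas : ∀ (i j : I) (E : Set T), MeasurableSet E → E ⊆ Dom i →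
      MeasurableSet {z | z ∈ E ∧ g i z ∈ Dom j ∧ g j (g i z) = z} := by
    intro i j E hE hED
    have hFmeas : Measurable (fun w : (Dom i) => ((Dom i).restrict (g i) w, (w : T))) :=
      (hemb i).measurable.prodMk measurable_subtype_coe
    have hu : MeasurableSet ((fun w : (Dom i) => ((Dom i).restrict (g i) w, (w : T))) ⁻¹'
        {p : T × T | p.1 ∈ Dom j ∧ g j p.1 = p.2}) := hFmeas (hgraph j)
    have him : MeasurableSet (Subtype.val ''
        ((fun w : (Dom i) => ((Dom i).restrict (g i) w, (w : T))) ⁻¹'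
          {p : T × T | p.1 ∈ Dom j ∧ g j p.1 = p.2})) :=
      MeasurableSet.subtype_image (hopen i).measurableSet hu
    have heq : {z | z ∈ E ∧ g i z ∈ Dom j ∧ g j (g i z) = z} =
        E ∩ (Subtype.val ''
          ((fun w : (Dom i) => ((Dom i).restrict (g i) w, (w : T))) ⁻¹'
            {p : T × T | p.1 ∈ Dom j ∧ g j p.1 = p.2})) := by
      ext z
      constructor
      · rintro ⟨hzE, h1, h2⟩
        exact ⟨hzE, ⟨z, hED hzE⟩, ⟨h1, h2⟩, rfl⟩
      · rintro ⟨hzE, ⟨w, hw⟩, hmem, rfl⟩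
        exact ⟨hzE, hmem.1, hmem.2⟩
    rw [heq]
    exact hE.inter him
  -- the reverse inequality
  have hB : ∀ (i : I) (E : Set T), MeasurableSet E → E ⊆ Dom i →
      μstar (g i '' E) ≤ μstar E := by
    intro i E hE hED
    haveI : Nonempty I := ⟨i⟩
    obtain ⟨n, ⟨eI⟩⟩ := Finite.exists_equiv_fin I
    set jx : ℕ → I := fun m => if h : m < n then eI.symm ⟨m, h⟩ else i with hjx
    set R : ℕ → Set T := fun m =>
      if m < n then {z | z ∈ E ∧ g i z ∈ Dom (jx m) ∧ g (jx m) (g i z) = z} else ∅ with hR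
    have hRmeas : ∀ m, MeasurableSet (R m) := by
      intro m
      simp only [hR]
      split_ifs
      · exact hPmeas i (jx m) E hE hED
      · exact MeasurableSet.empty
    have hRE : ∀ m, R m ⊆ E := by
      intro m z hz
      simp only [hR] at hz
      split_ifs at hz
      · exact hz.1
      · exact absurd hz (Set.notMem_empty z)
    have hRkey : ∀ m, ∀ z ∈ R m, g i z ∈ Dom (jx m) ∧ g (jx m) (g i z) = z := by
      intro m z hz
      simp only [hR] at hz
      split_ifs at hz
      · exact hz.2
      · exact absurd hz (Set.notMem_empty z)
    have hRcover : E ⊆ ⋃ m, R m := by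
      intro z hz
      obtain ⟨j, hj1, hj2⟩ := hsym i z (hED hz)
      refine mem_iUnion.2 ⟨(eI j).1, ?_⟩
      have hlt : (eI j).1 < n := (eI j).2
      have hjeq : jx (eI j).1 = j := by
        rw [hjx]
        simp only [hlt, dif_pos, Fin.eta, Equiv.symm_apply_apply]
      rw [hR]
      simp only [hlt, if_pos]
      rw [hjeq]
      exact ⟨hz, hj1, hj2⟩
    set Q : ℕ → Set T := disjointed R with hQ
    have hQmeas : ∀ m, MeasurableSet (Q m) := MeasurableSet.disjointed hRmeas
    have hQsub : ∀ m, Q m ⊆ R m := fun m => disjointed_subset R m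
    have hEQ : E = ⋃ m, Q m := by
      rw [hQ, iUnion_disjointed]
      exact le_antisymm hRcover (iUnion_subset hRE)
    have hQdisj : Pairwise (Function.onFun Disjoint Q) := disjoint_disjointed R
    calc μstar (g i '' E) = μstar (⋃ m, g i '' Q m) := by rw [hEQ, Set.image_iUnion]
    _ ≤ ∑' m, μstar (g i '' Q m) := measure_iUnion_le _
    _ ≤ ∑' m, μstar (Q m) := by
        refine ENNReal.tsum_le_tsum fun m => ?_
        have hQD : Q m ⊆ Dom i := ((hQsub m).trans (hRE m)).trans hED
        have hgm : MeasurableSet (g i '' Q m) := himg_meas i (Q m) (hQmeas m) hQD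
        have hsubD : g i '' Q m ⊆ Dom (jx m) := by
          rintro _ ⟨z, hz, rfl⟩
          exact (hRkey m z (hQsub m hz)).1
        have hle := hA (jx m) (g i '' Q m) hgm hsubD
        have heqQ : g (jx m) '' (g i '' Q m) = Q m := by
          rw [← Set.image_comp]
          have hid : ∀ z ∈ Q m, (g (jx m) ∘ g i) z = id z := fun z hz =>
            (hRkey m z (hQsub m hz)).2
          rw [Set.image_congr hid, Set.image_id]
        rw [heqQ] at hle
        exact hle
    _ = μstar (⋃ m, Q m) := (measure_iUnion hQdisj hQmeas).symm
    _ = μstar E := by rw [← hEQ]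
  exact ⟨hprob, fun i E hE hED => le_antisymm (hB i E hE hED) (hA i E hE hED), hsupp⟩
end

section
/- (Corollary of the invariant-measure criterion) If K ⊆ T is a closed invariant set for a finitely generated pseudogroup G admitting no G-invariant Borel probability measure supported in K, then there exists λ_K > 0 such that every x ∈ K has orbit growth rate gr(x) ≥ λ_K. -/
open MeasureTheory Set Filter
open scoped ENNReal NNReal Topology

/-- The growth rate `gr(x) = limsup_i ln(#B(x,i))/i` of the orbit of `x`. -/
noncomputable def pgGrowthRate {T I : Type*} (Dom : I → Set T) (g : I → T → T) (x : T) :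
    ℝ :=
  Filter.limsup (fun i : ℕ => Real.log ({y | pgReachIn Dom g i x y}.ncard) / i) atTop

namespace Stmt13

variable {T I : Type*} (Dom : I → Set T) (g : I → T → T)

def ball (x : T) (n : ℕ) : Set T := {y | pgReachIn Dom g n x y}

variable {Dom g}

lemma ball_zero (x : T) : ball Dom g x 0 = {x} := by
  ext y; simp only [ball, mem_setOf_eq, mem_singleton_iff]
  exact ⟨fun h => h.symm, fun h => h.symm⟩

lemma mem_ball_self (x : T) (n : ℕ) : x ∈ ball Dom g x n := by
  induction n with
  | zero => rfl
  | succ n ih => exact Or.inl ih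

lemma ball_succ_mono (x : T) (n : ℕ) : ball Dom g x n ⊆ ball Dom g x (n + 1) :=
  fun _ h => Or.inl h

lemma step_mem_ball {x y : T} {n : ℕ} (hy : y ∈ ball Dom g x n) {i : I} (hdom : y ∈ Dom i) :
    g i y ∈ ball Dom g x (n + 1) :=
  Or.inr ⟨y, hy, i, hdom, rfl⟩

lemma ball_subset_K {K : Set T} (hKinv : ∀ i, ∀ z ∈ K, z ∈ Dom i → g i z ∈ K)
    {x : T} (hx : x ∈ K) (n : ℕ) : ball Dom g x n ⊆ K := by
  induction n with
  | zero => rw [ball_zero]; simpa using hx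
  | succ n ih =>
    rintro y (h | ⟨z, hz, i, hdom, rfl⟩)
    · exact ih h
    · exact hKinv i z (ih hz) hdom

lemma ball_succ_subset (x : T) (n : ℕ) :
    ball Dom g x (n + 1) ⊆ ball Dom g x n ∪ ⋃ i, g i '' (ball Dom g x n ∩ Dom i) := by
  rintro y (h | ⟨z, hz, i, hdom, rfl⟩)
  · exact Or.inl h
  · exact Or.inr (mem_iUnion.2 ⟨i, ⟨z, ⟨hz, hdom⟩, rfl⟩⟩)

lemma ncard_iUnion_le {α ι : Type*} [Fintype ι] (f : ι → Set α) :
    (⋃ i, f i).ncard ≤ ∑ i, (f i).ncard := by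
  classical
  have H : ∀ s : Finset ι, (⋃ i ∈ s, f i).ncard ≤ ∑ i ∈ s, (f i).ncard := by
    intro s
    induction s using Finset.induction_on with
    | empty => simp
    | insert _ _ hnotmem ih =>
      rename_i a s
      rw [Finset.set_biUnion_insert, Finset.sum_insert hnotmem]
      exact le_trans (Set.ncard_union_le _ _) (by omega)
  simpa using H Finset.univ

lemma ball_one_le_ncard (x : T) (hfin : ∀ m, (ball Dom g x m).Finite) (n : ℕ) :
    1 ≤ (ball Dom g x n).ncard := by
  have := (Set.ncard_pos (hfin n)).2 ⟨x, mem_ball_self x n⟩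
  omega

lemma ball_card_succ_le [Finite I] (x : T) (hfin : ∀ m, (ball Dom g x m).Finite) (n : ℕ) :
    (ball Dom g x (n + 1)).ncard ≤ (1 + Nat.card I) * (ball Dom g x n).ncard := by
  classical
  haveI : Fintype I := Fintype.ofFinite I
  have hfu : (ball Dom g x n ∪ ⋃ i, g i '' (ball Dom g x n ∩ Dom i)).Finite :=
    (hfin n).union (Set.finite_iUnion fun i => ((hfin n).inter_of_left _).image _)
  have h1 : (ball Dom g x (n + 1)).ncard ≤
      (ball Dom g x n).ncard + ∑ i : I, (g i '' (ball Dom g x n ∩ Dom i)).ncard := by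
    refine le_trans (Set.ncard_le_ncard (ball_succ_subset x n) hfu) ?_
    refine le_trans (Set.ncard_union_le _ _) ?_
    gcongr
    exact ncard_iUnion_le _
  have h2 : ∀ i : I, (g i '' (ball Dom g x n ∩ Dom i)).ncard ≤ (ball Dom g x n).ncard := by
    intro i
    refine le_trans (Set.ncard_image_le ((hfin n).inter_of_left _)) ?_
    exact Set.ncard_le_ncard inter_subset_left (hfin n)
  calc (ball Dom g x (n + 1)).ncard
      ≤ (ball Dom g x n).ncard + ∑ i : I, (ball Dom g x n).ncard :=
        h1.trans (Nat.add_le_add_left (Finset.sum_le_sum fun i _ => h2 i) _)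
    _ = (1 + Nat.card I) * (ball Dom g x n).ncard := by
        rw [Finset.sum_const, Finset.card_univ, Nat.card_eq_fintype_card]; ring

lemma ball_card_le_pow [Finite I] (x : T) (hfin : ∀ m, (ball Dom g x m).Finite) (n : ℕ) :
    (ball Dom g x n).ncard ≤ (1 + Nat.card I) ^ n := by
  induction n with
  | zero => simp [ball_zero]
  | succ n ih =>
    calc (ball Dom g x (n + 1)).ncard ≤ (1 + Nat.card I) * (ball Dom g x n).ncard :=
          ball_card_succ_le x hfin n
      _ ≤ (1 + Nat.card I) * (1 + Nat.card I) ^ n := by gcongr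
      _ = (1 + Nat.card I) ^ (n + 1) := by ring

/-- The growth-rate sequence is bounded above. -/
lemma gr_bounded [Finite I] (x : T) (hfin : ∀ m, (ball Dom g x m).Finite) (n : ℕ) :
    Real.log ((ball Dom g x n).ncard) / n ≤ Real.log (1 + Nat.card I) := by
  have hlog_nonneg : (0:ℝ) ≤ Real.log (1 + Nat.card I) := by
    apply Real.log_nonneg
    have : (1:ℝ) ≤ (1 + Nat.card I : ℕ) := by exact_mod_cast Nat.le_add_right 1 _
    simpa using this
  rcases Nat.eq_zero_or_pos n with hn | hn
  · subst hn; simpa using hlog_nonneg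
  · have h1 : (1:ℝ) ≤ ((ball Dom g x n).ncard : ℝ) := by
      exact_mod_cast ball_one_le_ncard x hfin n
    have h2 : ((ball Dom g x n).ncard : ℝ) ≤ ((1 + Nat.card I : ℕ) : ℝ) ^ n := by
      exact_mod_cast ball_card_le_pow x hfin n
    rw [div_le_iff₀ (by exact_mod_cast hn)]
    calc Real.log ((ball Dom g x n).ncard) ≤ Real.log (((1 + Nat.card I : ℕ) : ℝ) ^ n) :=
          Real.log_le_log (by linarith) h2
      _ = n * Real.log ((1 + Nat.card I : ℕ) : ℝ) := by rw [Real.log_pow]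
      _ = Real.log (1 + Nat.card I) * n := by push_cast; ring

/-- If the growth rate is `< lam` then some ball has small doubling ratio. -/
lemma exists_ratio [Finite I] (hballfin : ∀ (x : T) (m : ℕ), {y | pgReachIn Dom g m x y}.Finite)
    {x : T} {lam : ℝ} (h0 : 0 < lam) (hgr : pgGrowthRate Dom g x < lam) :
    ∃ ℓ : ℕ, ((ball Dom g x (ℓ + 1)).ncard : ℝ) ≤ Real.exp (2 * lam) * (ball Dom g x ℓ).ncard := by
  have hfin : ∀ m, (ball Dom g x m).Finite := fun m => hballfin x m
  by_contra hcon
  push_neg at hcon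
  -- exponential lower bound on ball cards
  have key : ∀ ℓ : ℕ, Real.exp (2 * lam * ℓ) ≤ ((ball Dom g x ℓ).ncard : ℝ) := by
    intro ℓ
    induction ℓ with
    | zero => simp [ball_zero]
    | succ ℓ ih =>
      have h1 : Real.exp (2 * lam * ((ℓ:ℝ) + 1)) = Real.exp (2 * lam) * Real.exp (2 * lam * ℓ) := by
        rw [show 2 * lam * ((ℓ:ℝ) + 1) = 2 * lam + 2 * lam * ℓ by ring, Real.exp_add]
      rw [Nat.cast_succ, h1]
      calc Real.exp (2 * lam) * Real.exp (2 * lam * ℓ)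
          ≤ Real.exp (2 * lam) * ((ball Dom g x ℓ).ncard : ℝ) :=
            mul_le_mul_of_nonneg_left ih (Real.exp_pos _).le
        _ ≤ ((ball Dom g x (ℓ + 1)).ncard : ℝ) := (hcon ℓ).le
  -- hence the log-ratio sequence is eventually ≥ 2 lam
  have hfreq : ∃ᶠ n in (atTop : Filter ℕ),
      2 * lam ≤ Real.log ((ball Dom g x n).ncard) / n := by
    refine (eventually_atTop.2 ⟨1, fun n hn => ?_⟩).frequently
    have hpos : (0:ℝ) < n := by exact_mod_cast hn
    rw [le_div_iff₀ hpos]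
    calc 2 * lam * n ≤ Real.log (Real.exp (2 * lam * n)) := by rw [Real.log_exp]
      _ ≤ Real.log ((ball Dom g x n).ncard) :=
          Real.log_le_log (Real.exp_pos _) (key n)
  have hbdd : IsBoundedUnder (· ≤ ·) (atTop : Filter ℕ)
      (fun n : ℕ => Real.log ((ball Dom g x n).ncard) / n) :=
    isBoundedUnder_of ⟨Real.log (1 + Nat.card I), fun (n : ℕ) => gr_bounded x hfin n⟩
  have : 2 * lam ≤ pgGrowthRate Dom g x :=
    Filter.le_limsup_of_frequently_le hfreq hbdd
  linarith



/-! ### Ultrafilter limits in `ℝ≥0∞` -/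

noncomputable def ulim (𝒰 : Ultrafilter ℕ) (f : ℕ → ℝ≥0∞) : ℝ≥0∞ :=
  (isCompact_univ.ultrafilter_le_nhds (𝒰.map f) (by simp)).choose

lemma ulim_spec (𝒰 : Ultrafilter ℕ) (f : ℕ → ℝ≥0∞) : Tendsto f 𝒰 (𝓝 (ulim 𝒰 f)) :=
  (isCompact_univ.ultrafilter_le_nhds (𝒰.map f) (by simp)).choose_spec.2

lemma ulim_eq {𝒰 : Ultrafilter ℕ} {f : ℕ → ℝ≥0∞} {a : ℝ≥0∞} (h : Tendsto f 𝒰 (𝓝 a)) :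
    ulim 𝒰 f = a :=
  tendsto_nhds_unique (ulim_spec 𝒰 f) h

lemma ulim_const (𝒰 : Ultrafilter ℕ) (a : ℝ≥0∞) : ulim 𝒰 (fun _ => a) = a :=
  ulim_eq tendsto_const_nhds

lemma ulim_mono {𝒰 : Ultrafilter ℕ} {f h : ℕ → ℝ≥0∞} (hle : ∀ n, f n ≤ h n) :
    ulim 𝒰 f ≤ ulim 𝒰 h :=
  le_of_tendsto_of_tendsto' (ulim_spec 𝒰 f) (ulim_spec 𝒰 h) hle

lemma ulim_add (𝒰 : Ultrafilter ℕ) (f h : ℕ → ℝ≥0∞) :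
    ulim 𝒰 (fun n => f n + h n) = ulim 𝒰 f + ulim 𝒰 h :=
  ulim_eq ((ulim_spec 𝒰 f).add (ulim_spec 𝒰 h))

lemma ulim_of_tendsto {𝒰 : Ultrafilter ℕ} (h𝒰 : (𝒰 : Filter ℕ) ≤ atTop) {f : ℕ → ℝ≥0∞}
    {a : ℝ≥0∞} (h : Tendsto f atTop (𝓝 a)) : ulim 𝒰 f = a :=
  ulim_eq (h.mono_left h𝒰)

/-- Helper: relative preimages of measurable sets under relatively continuous maps
are measurable. -/
lemma measurableSet_inter_preimage {α β : Type*} [TopologicalSpace α] [MeasurableSpace α]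
    [OpensMeasurableSpace α] [TopologicalSpace β] [MeasurableSpace β] [BorelSpace β]
    {s : Set α} (hs : MeasurableSet s) {f : α → β} (hf : ContinuousOn f s) {t : Set β}
    (ht : MeasurableSet t) : MeasurableSet (s ∩ f ⁻¹' t) := by
  have hm : Measurable (s.restrict f) := hf.restrict.measurable
  have heq : s ∩ f ⁻¹' t = (Subtype.val : s → α) '' ((s.restrict f) ⁻¹' t) := by
    ext a; constructor
    · rintro ⟨ha, hat⟩; exact ⟨⟨a, ha⟩, hat, rfl⟩
    · rintro ⟨⟨a, ha⟩, hat, rfl⟩; exact ⟨ha, hat⟩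
  rw [heq]
  exact (MeasurableEmbedding.subtype_coe hs).measurableSet_image.2 (hm ht)


/-! ### Counting lemmas -/

lemma count_to_image {x : T} {ℓ : ℕ} (hfin : ∀ m, (ball Dom g x m).Finite)
    (hinj : ∀ i, Set.InjOn (g i) (Dom i))
    {i : I} {E : Set T} (hE : E ⊆ Dom i) :
    (ball Dom g x ℓ ∩ E).ncard ≤ (ball Dom g x (ℓ + 1) ∩ (g i '' E)).ncard := by
  have himg : g i '' (ball Dom g x ℓ ∩ E) ⊆ ball Dom g x (ℓ + 1) ∩ (g i '' E) := by
    rintro - ⟨y, ⟨hyb, hyE⟩, rfl⟩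
    exact ⟨step_mem_ball hyb (hE hyE), mem_image_of_mem _ hyE⟩
  calc (ball Dom g x ℓ ∩ E).ncard = (g i '' (ball Dom g x ℓ ∩ E)).ncard :=
        (Set.ncard_image_of_injOn ((hinj i).mono fun y hy => hE hy.2)).symm
    _ ≤ (ball Dom g x (ℓ + 1) ∩ (g i '' E)).ncard :=
        Set.ncard_le_ncard himg ((hfin (ℓ + 1)).inter_of_left _)

lemma count_from_image {x : T} {ℓ : ℕ} (hfin : ∀ m, (ball Dom g x m).Finite)
    (hinj : ∀ i, Set.InjOn (g i) (Dom i))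
    (hsym : ∀ i, ∀ z ∈ Dom i, ∃ j, g i z ∈ Dom j ∧ g j (g i z) = z)
    {i : I} {E : Set T} (hE : E ⊆ Dom i) :
    (ball Dom g x ℓ ∩ (g i '' E)).ncard ≤ (ball Dom g x (ℓ + 1) ∩ E).ncard := by
  classical
  haveI : Nonempty T := ⟨x⟩
  set φ : T → T := Function.invFunOn (g i) (Dom i) with hφ
  have hkey : ∀ w ∈ ball Dom g x ℓ ∩ (g i '' E), φ w ∈ Dom i ∧ g i (φ w) = w := by
    rintro w ⟨hwb, y, hyE, rfl⟩
    have hex : ∃ a ∈ Dom i, g i a = g i y := ⟨y, hE hyE, rfl⟩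
    exact ⟨Function.invFunOn_mem hex, Function.invFunOn_eq hex⟩
  have hmaps : ∀ w ∈ ball Dom g x ℓ ∩ (g i '' E), φ w ∈ ball Dom g x (ℓ + 1) ∩ E := by
    rintro w hw
    obtain ⟨hdom, heq⟩ := hkey w hw
    obtain ⟨hwb, y, hyE, rfl⟩ := hw
    have hy : φ (g i y) = y := (hinj i) hdom (hE hyE) (by rw [heq])
    constructor
    · rw [hy]
      obtain ⟨j, hj1, hj2⟩ := hsym i y (hE hyE)
      have := step_mem_ball hwb hj1
      rwa [hj2] at this
    · rw [hy]; exact hyE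
  have hinjφ : Set.InjOn φ (ball Dom g x ℓ ∩ (g i '' E)) := by
    intro w1 h1 w2 h2 he
    have e1 := (hkey w1 h1).2
    have e2 := (hkey w2 h2).2
    rw [← e1, ← e2, he]
  exact Set.ncard_le_ncard_of_injOn φ hmaps hinjφ ((hfin (ℓ + 1)).inter_of_left _)

lemma count_window {x : T} {ℓ : ℕ} (hfin : ∀ m, (ball Dom g x m).Finite) (A : Set T) :
    (ball Dom g x (ℓ + 1) ∩ A).ncard ≤
      (ball Dom g x ℓ ∩ A).ncard +
        ((ball Dom g x (ℓ + 1)).ncard - (ball Dom g x ℓ).ncard) := by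
  have hsub : ball Dom g x (ℓ + 1) ∩ A ⊆
      (ball Dom g x ℓ ∩ A) ∪ (ball Dom g x (ℓ + 1) \ ball Dom g x ℓ) := by
    rintro y ⟨hyS, hyA⟩
    by_cases hyB : y ∈ ball Dom g x ℓ
    · exact Or.inl ⟨hyB, hyA⟩
    · exact Or.inr ⟨hyS, hyB⟩
  calc (ball Dom g x (ℓ + 1) ∩ A).ncard
      ≤ ((ball Dom g x ℓ ∩ A) ∪ (ball Dom g x (ℓ + 1) \ ball Dom g x ℓ)).ncard :=
        Set.ncard_le_ncard hsub
          (((hfin ℓ).inter_of_left _).union ((hfin (ℓ + 1)).diff))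
    _ ≤ (ball Dom g x ℓ ∩ A).ncard + (ball Dom g x (ℓ + 1) \ ball Dom g x ℓ).ncard :=
        Set.ncard_union_le _ _
    _ = (ball Dom g x ℓ ∩ A).ncard +
        ((ball Dom g x (ℓ + 1)).ncard - (ball Dom g x ℓ).ncard) := by
        rw [Set.ncard_diff (ball_succ_mono x ℓ) (hfin ℓ)]

end Stmt13

open Stmt13

/-- If `K ⊆ T` is a closed invariant set for a finitely generated pseudogroup `G` on a
compact metric space admitting no `G`-invariant Borel probability measure supported in
`K`, then there exists `λ_K > 0` such that every `x ∈ K` has orbit growth rate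
`gr(x) ≥ λ_K`. -/
theorem stmt_13 {T : Type*} [MetricSpace T] [CompactSpace T]
    [MeasurableSpace T] [BorelSpace T]
    {I : Type*} [Finite I]
    (Dom : I → Set T) (g : I → T → T)
    (hopen : ∀ i, IsOpen (Dom i))
    (hcont : ∀ i, ContinuousOn (g i) (Dom i))
    (hinj : ∀ i, Set.InjOn (g i) (Dom i))
    (hsym : ∀ i, ∀ z ∈ Dom i, ∃ j, g i z ∈ Dom j ∧ g j (g i z) = z)
    (hballfin : ∀ (x : T) (i : ℕ), {y | pgReachIn Dom g i x y}.Finite)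
    (K : Set T) (hK : IsClosed K)
    (hKinv : ∀ i, ∀ z ∈ K, z ∈ Dom i → g i z ∈ K)
    (hnomeas : ¬ ∃ μ : Measure T, IsProbabilityMeasure μ ∧
      (∀ i, ∀ E : Set T, MeasurableSet E → E ⊆ Dom i → μ (g i '' E) = μ E) ∧
      μ Kᶜ = 0) :
    ∃ lamK : ℝ, 0 < lamK ∧ ∀ x ∈ K, lamK ≤ pgGrowthRate Dom g x := by
  classical
  by_contra hcon
  push_neg at hcon
  -- pick points with small growth rate and balls with small doubling ratio
  have hpick : ∀ n : ℕ, ∃ x ∈ K, pgGrowthRate Dom g x < 1 / ((n : ℝ) + 1) := by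
    intro n; exact hcon _ (by positivity)
  choose x hxK hxgr using hpick
  have hfinB : ∀ (y : T) (m : ℕ), (ball Dom g y m).Finite := fun y m => hballfin y m
  have hratio : ∀ n : ℕ, ∃ ℓ : ℕ,
      ((ball Dom g (x n) (ℓ + 1)).ncard : ℝ) ≤
        Real.exp (2 * (1 / ((n : ℝ) + 1))) * ((ball Dom g (x n) ℓ).ncard : ℝ) :=
    fun n => exists_ratio hballfin (by positivity) (hxgr n)
  choose ℓ hℓ using hratio
  set B : ℕ → Set T := fun n => ball Dom g (x n) (ℓ n) with hB
  set S : ℕ → Set T := fun n => ball Dom g (x n) (ℓ n + 1) with hS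
  set Nb : ℕ → ℕ := fun n => (B n).ncard with hNb
  have hNbpos : ∀ n, 0 < Nb n := fun n =>
    (Set.ncard_pos (hfinB _ _)).2 ⟨x n, mem_ball_self _ _⟩
  have hNb_ne : ∀ n, ((Nb n : ℝ≥0∞)) ≠ 0 := by
    intro n; exact_mod_cast (hNbpos n).ne'
  have hNb_top : ∀ n, ((Nb n : ℝ≥0∞)) ≠ ⊤ := fun n => ENNReal.natCast_ne_top _
  -- the normalized counting measures
  set ν : ℕ → Set T → ℝ≥0∞ := fun n A => ((B n ∩ A).ncard : ℝ≥0∞) / (Nb n : ℝ≥0∞) with hν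
  have hν_mono : ∀ n ⦃A A' : Set T⦄, A ⊆ A' → ν n A ≤ ν n A' := by
    intro n A A' h
    refine ENNReal.div_le_div_right ?_ _
    exact_mod_cast Set.ncard_le_ncard (inter_subset_inter_right _ h) ((hfinB _ _).inter_of_left _)
  have hν_univ : ∀ n, ν n univ = 1 := by
    intro n
    simp only [hν, inter_univ]
    exact ENNReal.div_self (hNb_ne n) (hNb_top n)
  have hν_le_one : ∀ n (A : Set T), ν n A ≤ 1 := fun n A =>
    le_trans (hν_mono n (subset_univ A)) (hν_univ n).le
  have hν_add : ∀ n (A A' : Set T), Disjoint A A' → ν n (A ∪ A') = ν n A + ν n A' := by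
    intro n A A' h
    have hin : B n ∩ (A ∪ A') = (B n ∩ A) ∪ (B n ∩ A') := inter_union_distrib_left _ _ _
    have hdis : Disjoint (B n ∩ A) (B n ∩ A') := h.mono inter_subset_right inter_subset_right
    simp only [hν, hin,
      Set.ncard_union_eq hdis ((hfinB _ _).inter_of_left _) ((hfinB _ _).inter_of_left _)]
    rw [Nat.cast_add, ENNReal.add_div]
  have hν_union_le : ∀ n (A A' : Set T), ν n (A ∪ A') ≤ ν n A + ν n A' := by
    intro n A A'
    have hin : B n ∩ (A ∪ A') = (B n ∩ A) ∪ (B n ∩ A') := inter_union_distrib_left _ _ _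
    simp only [hν, hin]
    rw [← ENNReal.add_div]
    refine ENNReal.div_le_div_right ?_ _
    exact_mod_cast Set.ncard_union_le _ _
  have hν_Kc : ∀ n, ν n Kᶜ = 0 := by
    intro n
    have hsub : B n ⊆ K := ball_subset_K hKinv (hxK n) (ℓ n)
    have : B n ∩ Kᶜ = ∅ := by
      rw [← subset_empty_iff]
      intro y ⟨h1, h2⟩
      exact h2 (hsub h1)
    simp [hν, this]
  -- almost invariance
  set δ : ℕ → ℝ≥0∞ := fun n => ENNReal.ofReal (Real.exp (2 * (1 / ((n : ℝ) + 1))) - 1) with hδdef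
  have hδ : Tendsto δ atTop (𝓝 0) := by
    have h1 : Tendsto (fun n : ℕ => 1 / ((n : ℝ) + 1)) atTop (𝓝 0) :=
      tendsto_one_div_add_atTop_nhds_zero_nat
    have h2 : Tendsto (fun n : ℕ => 2 * (1 / ((n : ℝ) + 1))) atTop (𝓝 0) := by
      simpa using h1.const_mul (2 : ℝ)
    have h3 : Tendsto (fun n : ℕ => Real.exp (2 * (1 / ((n : ℝ) + 1)))) atTop (𝓝 1) := by
      simpa [Function.comp_def] using (Real.continuous_exp.tendsto 0).comp h2
    have h4 : Tendsto (fun n : ℕ => Real.exp (2 * (1 / ((n : ℝ) + 1))) - 1) atTop (𝓝 0) := by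
      simpa using h3.sub_const 1
    have h5 := ENNReal.tendsto_ofReal h4
    rw [ENNReal.ofReal_zero] at h5
    exact h5
  have hai : ∀ n (i : I) (E : Set T), E ⊆ Dom i →
      ν n E ≤ ν n (g i '' E) + δ n ∧ ν n (g i '' E) ≤ ν n E + δ n := by
    intro n i E hE
    set d : ℕ := (S n).ncard - Nb n with hd
    have hBS : Nb n ≤ (S n).ncard := Set.ncard_le_ncard (ball_succ_mono _ _) (hfinB _ _)
    have hone : (1 : ℝ) ≤ Real.exp (2 * (1 / ((n : ℝ) + 1))) :=
      Real.one_le_exp (by positivity)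
    have hdR : (d : ℝ) ≤ (Real.exp (2 * (1 / ((n : ℝ) + 1))) - 1) * (Nb n : ℝ) := by
      have h1 : ((d : ℕ) : ℝ) = ((S n).ncard : ℝ) - (Nb n : ℝ) := by
        rw [hd, Nat.cast_sub hBS]
      have h2 := hℓ n
      have h3 : (0 : ℝ) ≤ (Nb n : ℝ) := Nat.cast_nonneg _
      rw [h1]
      nlinarith [h2]
    have hdiv : ((d : ℕ) : ℝ≥0∞) / (Nb n : ℝ≥0∞) ≤ δ n := by
      rw [ENNReal.div_le_iff_le_mul (Or.inl (hNb_ne n)) (Or.inl (hNb_top n))]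
      calc ((d : ℕ) : ℝ≥0∞) = ENNReal.ofReal ((d : ℕ) : ℝ) := by
            rw [ENNReal.ofReal_natCast]
        _ ≤ ENNReal.ofReal ((Real.exp (2 * (1 / ((n : ℝ) + 1))) - 1) * (Nb n : ℝ)) :=
            ENNReal.ofReal_le_ofReal hdR
        _ = δ n * (Nb n : ℝ≥0∞) := by
            rw [ENNReal.ofReal_mul (by linarith), hδdef, ENNReal.ofReal_natCast]
    have key : ∀ (A A' : Set T),
        (B n ∩ A).ncard ≤ (B n ∩ A').ncard + d → ν n A ≤ ν n A' + δ n := by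
      intro A A' hcard
      calc ν n A = ((B n ∩ A).ncard : ℝ≥0∞) / (Nb n : ℝ≥0∞) := rfl
        _ ≤ (((B n ∩ A').ncard + d : ℕ) : ℝ≥0∞) / (Nb n : ℝ≥0∞) :=
            ENNReal.div_le_div_right (by exact_mod_cast hcard) _
        _ = ((B n ∩ A').ncard : ℝ≥0∞) / (Nb n : ℝ≥0∞) + ((d : ℕ) : ℝ≥0∞) / (Nb n : ℝ≥0∞) := by
            rw [Nat.cast_add, ENNReal.add_div]
        _ ≤ ν n A' + δ n := add_le_add le_rfl hdiv
    constructor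
    · refine key E (g i '' E) ?_
      calc (B n ∩ E).ncard ≤ (S n ∩ (g i '' E)).ncard := count_to_image (hfinB (x n)) hinj hE
        _ ≤ (B n ∩ (g i '' E)).ncard + d := count_window (hfinB (x n)) _
    · refine key (g i '' E) E ?_
      calc (B n ∩ (g i '' E)).ncard ≤ (S n ∩ E).ncard := count_from_image (hfinB (x n)) hinj hsym hE
        _ ≤ (B n ∩ E).ncard + d := count_window (hfinB (x n)) _
  -- ultrafilter limit of the counting measures
  set 𝒰 : Ultrafilter ℕ := Ultrafilter.of atTop with h𝒰def
  have h𝒰 : (𝒰 : Filter ℕ) ≤ atTop := Ultrafilter.of_le atTop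
  set mfn : Set T → ℝ≥0∞ := fun A => ulim 𝒰 (fun n => ν n A) with hmfn
  have hm_mono : ∀ ⦃A A' : Set T⦄, A ⊆ A' → mfn A ≤ mfn A' := fun A A' h =>
    ulim_mono fun n => hν_mono n h
  have hm_univ : mfn univ = 1 :=
    (congrArg (ulim 𝒰) (funext hν_univ)).trans (ulim_const 𝒰 1)
  have hm_add : ∀ (A A' : Set T), Disjoint A A' → mfn (A ∪ A') = mfn A + mfn A' := by
    intro A A' h
    exact (congrArg (ulim 𝒰) (funext fun n => hν_add n A A' h)).trans (ulim_add 𝒰 _ _)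
  have hm_union_le : ∀ (A A' : Set T), mfn (A ∪ A') ≤ mfn A + mfn A' := by
    intro A A'
    calc mfn (A ∪ A') ≤ ulim 𝒰 (fun n => ν n A + ν n A') :=
          ulim_mono fun n => hν_union_le n A A'
      _ = mfn A + mfn A' := ulim_add 𝒰 _ _
  have hm_Kc : mfn Kᶜ = 0 :=
    (congrArg (ulim 𝒰) (funext hν_Kc)).trans (ulim_const 𝒰 0)
  have hδ0 : ulim 𝒰 δ = 0 := ulim_of_tendsto h𝒰 hδ
  have hm_inv : ∀ (i : I) (E : Set T), E ⊆ Dom i → mfn (g i '' E) = mfn E := by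
    intro i E hE
    have h1 : mfn (g i '' E) ≤ mfn E := by
      calc mfn (g i '' E) ≤ ulim 𝒰 (fun n => ν n E + δ n) :=
            ulim_mono fun n => (hai n i E hE).2
        _ = mfn E + ulim 𝒰 δ := ulim_add 𝒰 _ _
        _ = mfn E := by rw [hδ0, add_zero]
    have h2 : mfn E ≤ mfn (g i '' E) := by
      calc mfn E ≤ ulim 𝒰 (fun n => ν n (g i '' E) + δ n) :=
            ulim_mono fun n => (hai n i E hE).1
        _ = mfn (g i '' E) + ulim 𝒰 δ := ulim_add 𝒰 _ _
        _ = mfn (g i '' E) := by rw [hδ0, add_zero]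
    exact le_antisymm h1 h2
  -- the limit content and its measure
  set lamE : Set T → ℝ≥0∞ := fun C => ⨅ U : {U : Set T // IsOpen U ∧ C ⊆ U}, mfn U
    with hlamE
  have hlam_le_m : ∀ (C U : Set T), IsOpen U → C ⊆ U → lamE C ≤ mfn U := by
    intro C U hU hCU
    exact iInf_le (fun V : {U : Set T // IsOpen U ∧ C ⊆ U} => mfn V) ⟨U, hU, hCU⟩
  have hlam_le_one : ∀ C : Set T, lamE C ≤ 1 :=
    fun C => le_trans (hlam_le_m C univ isOpen_univ (subset_univ C)) hm_univ.le
  have hlam_ne_top : ∀ C : Set T, lamE C ≠ ⊤ :=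
    fun C => ne_top_of_le_ne_top ENNReal.one_ne_top (hlam_le_one C)
  have hlam_mono : ∀ ⦃C C' : Set T⦄, C ⊆ C' → lamE C ≤ lamE C' := by
    intro C C' h
    refine le_iInf fun U => ?_
    exact hlam_le_m C U U.2.1 (h.trans U.2.2)
  have hsubadd : ∀ C₁ C₂ : Set T, lamE (C₁ ∪ C₂) ≤ lamE C₁ + lamE C₂ := by
    intro C1 C2
    have hrw : lamE C1 + lamE C2 =
        ⨅ (U : {U : Set T // IsOpen U ∧ C1 ⊆ U}) (V : {V : Set T // IsOpen V ∧ C2 ⊆ V}),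
          (mfn ↑U + mfn ↑V) := by
      rw [hlamE]
      rw [ENNReal.iInf_add]
      exact iInf_congr fun U => ENNReal.add_iInf
    rw [hrw]
    refine le_iInf fun U => le_iInf fun V => ?_
    calc lamE (C1 ∪ C2) ≤ mfn (↑U ∪ ↑V) :=
          hlam_le_m _ _ (U.2.1.union V.2.1) (union_subset_union U.2.2 V.2.2)
      _ ≤ mfn ↑U + mfn ↑V := hm_union_le _ _
  have hsup : ∀ {C1 C2 : Set T}, IsCompact C1 → IsCompact C2 → Disjoint C1 C2 →
      lamE C1 + lamE C2 ≤ lamE (C1 ∪ C2) := by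
    intro C1 C2 hC1 hC2 hd
    obtain ⟨V1, V2, hV1, hV2, hC1V, hC2V, hVd⟩ := SeparatedNhds.of_isCompact_isCompact hC1 hC2 hd
    refine le_iInf fun U => ?_
    have h1 : C1 ⊆ ↑U ∩ V1 := subset_inter (subset_union_left.trans U.2.2) hC1V
    have h2 : C2 ⊆ ↑U ∩ V2 := subset_inter (subset_union_right.trans U.2.2) hC2V
    calc lamE C1 + lamE C2 ≤ mfn (↑U ∩ V1) + mfn (↑U ∩ V2) :=
          add_le_add (hlam_le_m _ _ (U.2.1.inter hV1) h1) (hlam_le_m _ _ (U.2.1.inter hV2) h2)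
      _ = mfn ((↑U ∩ V1) ∪ (↑U ∩ V2)) :=
          (hm_add _ _ (hVd.mono inter_subset_right inter_subset_right)).symm
      _ ≤ mfn ↑U := hm_mono (union_subset inter_subset_left inter_subset_left)
  set cont : MeasureTheory.Content T :=
    { toFun := fun C => (lamE ↑C).toNNReal
      mono' := fun K1 K2 h => ENNReal.toNNReal_mono (hlam_ne_top _) (hlam_mono h)
      sup_disjoint' := by
        intro K1 K2 hd _ _
        have heq : lamE (↑K1 ∪ ↑K2) = lamE ↑K1 + lamE ↑K2 :=
          le_antisymm (hsubadd _ _) (hsup K1.2 K2.2 hd)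
        simp only [TopologicalSpace.Compacts.coe_sup]
        rw [heq, ENNReal.toNNReal_add (hlam_ne_top _) (hlam_ne_top _)]
      sup_le' := by
        intro K1 K2
        simp only [TopologicalSpace.Compacts.coe_sup]
        rw [← ENNReal.toNNReal_add (hlam_ne_top _) (hlam_ne_top _)]
        refine ENNReal.toNNReal_mono ?_ (hsubadd _ _)
        exact ENNReal.add_ne_top.2 ⟨hlam_ne_top _, hlam_ne_top _⟩ }
    with hcontdef
  have hcont_coe : ∀ Kc : TopologicalSpace.Compacts T, (cont Kc : ℝ≥0∞) = lamE ↑Kc := by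
    intro Kc
    show ((lamE ↑Kc).toNNReal : ℝ≥0∞) = lamE ↑Kc
    exact ENNReal.coe_toNNReal (hlam_ne_top _)
  set μ : Measure T := cont.measure with hμdef
  have hμ_open_le : ∀ {U : Set T}, IsOpen U → μ U ≤ mfn U := by
    intro U hU
    rw [hμdef, MeasureTheory.Content.measure_apply _ hU.measurableSet,
      cont.outerMeasure_of_isOpen U hU]
    refine iSup₂_le fun Kc hKU => ?_
    rw [hcont_coe]
    exact hlam_le_m _ _ hU hKU
  have hμ_univ : μ univ = 1 := by
    refine le_antisymm (le_trans (hμ_open_le isOpen_univ) hm_univ.le) ?_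
    rw [hμdef, MeasureTheory.Content.measure_apply _ MeasurableSet.univ,
      cont.outerMeasure_of_isOpen univ isOpen_univ]
    have h1 : (cont ⟨univ, isCompact_univ⟩ : ℝ≥0∞) ≤
        cont.innerContent ⟨univ, isOpen_univ⟩ :=
      cont.le_innerContent _ _ (subset_univ _)
    refine le_trans ?_ h1
    rw [hcont_coe]
    refine le_iInf fun U => ?_
    exact le_trans hm_univ.ge (hm_mono U.2.2)
  haveI hPM : IsProbabilityMeasure μ := ⟨hμ_univ⟩
  have hclosed : ∀ {F : Set T}, IsClosed F → mfn F ≤ μ F := by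
    intro F hF
    have hsum : mfn F + mfn Fᶜ = 1 := by
      rw [← hm_add F Fᶜ disjoint_compl_right, union_compl_self, hm_univ]
    have hμsum : μ F + μ Fᶜ = 1 := by
      rw [measure_add_measure_compl hF.measurableSet, hμ_univ]
    have hcompl : μ Fᶜ ≤ mfn Fᶜ := hμ_open_le hF.isOpen_compl
    have hne : mfn Fᶜ ≠ ⊤ := by
      intro h
      rw [h, add_top] at hsum
      exact ENNReal.one_ne_top hsum.symm
    have hle : mfn F + mfn Fᶜ ≤ μ F + mfn Fᶜ := by
      rw [hsum, ← hμsum]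
      exact add_le_add le_rfl hcompl
    exact (ENNReal.add_le_add_iff_right hne).1 hle
  -- invariance inequality for compact subsets of a chart domain
  have hcompact : ∀ (i : I) {C : Set T}, IsCompact C → C ⊆ Dom i → μ C ≤ μ (g i '' C) := by
    intro i C hC hCD
    obtain ⟨r, hr0, hrsub⟩ := hC.exists_cthickening_subset_open (hopen i) hCD
    set Am : ℕ → Set T := fun mm => Metric.cthickening (r / (mm + 1)) C with hAm
    have hrm : ∀ mm : ℕ, 0 < r / ((mm : ℝ) + 1) := by
      intro mm; positivity
    have hAmD : ∀ mm, Am mm ⊆ Dom i := by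
      intro mm
      refine (Metric.cthickening_mono ?_ C).trans hrsub
      rw [div_le_iff₀ (by positivity)]
      nlinarith [hr0, Nat.cast_nonneg (α := ℝ) mm]
    have hAmcpt : ∀ mm, IsCompact (Am mm) := fun mm =>
      Metric.isClosed_cthickening.isCompact
    have hgAm_closed : ∀ mm, IsClosed (g i '' Am mm) := fun mm =>
      ((hAmcpt mm).image_of_continuousOn ((hcont i).mono (hAmD mm))).isClosed
    have hCAm : ∀ mm, C ⊆ Am mm := fun mm => Metric.self_subset_cthickening C
    have step1 : ∀ mm, μ C ≤ μ (g i '' Am mm) := by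
      intro mm
      calc μ C ≤ μ (Metric.thickening (r / (mm + 1)) C) :=
            measure_mono (Metric.self_subset_thickening (hrm mm) C)
        _ ≤ mfn (Metric.thickening (r / (mm + 1)) C) := hμ_open_le Metric.isOpen_thickening
        _ ≤ mfn (Am mm) := hm_mono (Metric.thickening_subset_cthickening _ _)
        _ = mfn (g i '' Am mm) := (hm_inv i _ (hAmD mm)).symm
        _ ≤ μ (g i '' Am mm) := hclosed (hgAm_closed mm)
    have hanti : Antitone (fun mm : ℕ => g i '' Am mm) := by
      intro a b hab
      refine image_mono (Metric.cthickening_mono ?_ C)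
      have h1 : ((a : ℝ) + 1) ≤ ((b : ℝ) + 1) := by exact_mod_cast Nat.succ_le_succ hab
      exact div_le_div_of_nonneg_left hr0.le (by positivity) h1
    have hiInter : ⋂ mm, g i '' Am mm = g i '' C := by
      apply Subset.antisymm
      · intro w hw
        rw [mem_iInter] at hw
        obtain ⟨z0, hz0, hz0w⟩ := hw 0
        have hz0C : z0 ∈ ⋂ mm, Am mm := by
          rw [mem_iInter]
          intro mm
          obtain ⟨zm, hzm, hzmw⟩ := hw mm
          have : zm = z0 := (hinj i) (hAmD mm hzm) (hAmD 0 hz0) (hzmw.trans hz0w.symm)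
          rwa [← this]
        have hiA : ⋂ mm, Am mm = C := by
          apply Subset.antisymm
          · intro y hy
            rw [mem_iInter] at hy
            have hle0 : EMetric.infEdist y C = 0 := by
              have htends : Tendsto (fun mm : ℕ => ENNReal.ofReal (r / (mm + 1))) atTop (𝓝 0) := by
                have hr1 : Tendsto (fun mm : ℕ => r / ((mm : ℝ) + 1)) atTop (𝓝 0) := by
                  have := tendsto_one_div_add_atTop_nhds_zero_nat.const_mul r
                  simpa [div_eq_mul_inv, one_div] using this
                have := ENNReal.tendsto_ofReal hr1
                rwa [ENNReal.ofReal_zero] at this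
              have hub : ∀ mm : ℕ, EMetric.infEdist y C ≤ ENNReal.ofReal (r / (mm + 1)) :=
                fun mm => Metric.mem_cthickening_iff.1 (hy mm)
              exact le_antisymm (ge_of_tendsto' htends hub) zero_le
            have : y ∈ closure C := EMetric.mem_closure_iff_infEdist_zero.2 hle0
            rwa [hC.isClosed.closure_eq] at this
          · exact subset_iInter fun mm => hCAm mm
        rw [← hz0w]
        exact mem_image_of_mem _ (hiA ▸ hz0C)
      · exact subset_iInter fun mm => image_mono (hCAm mm)
    have htend := tendsto_measure_iInter_atTop (μ := μ)
      (fun mm => ((hgAm_closed mm).measurableSet).nullMeasurableSet) hanti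
      ⟨0, measure_ne_top μ _⟩
    rw [hiInter] at htend
    exact ge_of_tendsto' htend step1
  have himg_meas : ∀ (i : I) {E : Set T}, MeasurableSet E → E ⊆ Dom i →
      MeasurableSet (g i '' E) := by
    intro i E hE hED
    exact hE.image_of_continuousOn_injOn ((hcont i).mono hED) ((hinj i).mono hED)
  have hforward : ∀ (i : I) (E : Set T), MeasurableSet E → E ⊆ Dom i → μ E ≤ μ (g i '' E) := by
    intro i E hE hED
    rw [hE.measure_eq_iSup_isCompact]
    refine iSup₂_le fun C hCE => iSup_le fun hC => ?_
    exact (hcompact i hC (hCE.trans hED)).trans (measure_mono (image_mono hCE))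
  have hrev : ∀ (i : I) (E : Set T), MeasurableSet E → E ⊆ Dom i → μ (g i '' E) ≤ μ E := by
    intro i E hE hED
    haveI : Nonempty I := ⟨i⟩
    obtain ⟨σ, hσ⟩ := exists_surjective_nat I
    set W : I → Set T := fun j => Dom j ∩ (g j) ⁻¹' (Dom i) with hWdef
    have hWopen : ∀ j, IsOpen (W j) := fun j =>
      (hcont j).isOpen_inter_preimage (hopen j) (hopen i)
    set Tj : I → Set T := fun j =>
      (Dom j ∩ (g j) ⁻¹' E) ∩
        (W j ∩ (fun w => (g i (g j w), w)) ⁻¹' {p : T × T | p.1 = p.2}) with hTjdef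
    have hTmeas : ∀ j, MeasurableSet (Tj j) := by
      intro j
      refine (measurableSet_inter_preimage (hopen j).measurableSet (hcont j) hE).inter ?_
      refine measurableSet_inter_preimage (hWopen j).measurableSet ?_
        (isClosed_eq continuous_fst continuous_snd).measurableSet
      refine ContinuousOn.prodMk ?_ continuousOn_id
      refine (hcont i).comp ((hcont j).mono inter_subset_left) ?_
      exact fun w hw => hw.2
    have hTsub : ∀ j, Tj j ⊆ Dom j := fun j w hw => hw.1.1
    have hTprop : ∀ j w, w ∈ Tj j → g j w ∈ E ∧ g i (g j w) = w := by
      intro j w hw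
      exact ⟨hw.1.2, hw.2.2⟩
    have hcover : g i '' E ⊆ ⋃ j, Tj j := by
      rintro - ⟨z, hz, rfl⟩
      obtain ⟨j, hj1, hj2⟩ := hsym i z (hED hz)
      refine mem_iUnion.2 ⟨j, ⟨⟨hj1, ?_⟩, ⟨⟨hj1, ?_⟩, ?_⟩⟩⟩
      · show g j (g i z) ∈ E; rw [hj2]; exact hz
      · show g j (g i z) ∈ Dom i; rw [hj2]; exact hED hz
      · show (g i (g j (g i z)), g i z) ∈ {p : T × T | p.1 = p.2}
        simp only [mem_setOf_eq, hj2]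
    set Sn : ℕ → Set T := fun n => (g i '' E) ∩ Tj (σ n) with hSndef
    set An : ℕ → Set T := disjointed Sn with hAndef
    have hAn_meas : ∀ n, MeasurableSet (An n) :=
      MeasurableSet.disjointed fun n => (himg_meas i hE hED).inter (hTmeas _)
    have hAn_sub : ∀ n, An n ⊆ Sn n := fun n => disjointed_subset Sn n
    have hUnion : ⋃ n, An n = g i '' E := by
      rw [hAndef, iUnion_disjointed]
      apply Subset.antisymm
      · exact iUnion_subset fun n => inter_subset_left
      · intro w hw
        obtain ⟨j, hj⟩ := mem_iUnion.1 (hcover hw)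
        obtain ⟨n, rfl⟩ := hσ j
        exact mem_iUnion.2 ⟨n, hw, hj⟩
    set Bn : ℕ → Set T := fun n => g (σ n) '' An n with hBndef
    have hAnD : ∀ n, An n ⊆ Dom (σ n) := fun n => (hAn_sub n).trans
      (inter_subset_right.trans (hTsub _))
    have hBn_subE : ∀ n, Bn n ⊆ E := by
      rintro n - ⟨w, hw, rfl⟩
      exact (hTprop _ _ ((hAn_sub n hw).2)).1
    have hBn_meas : ∀ n, MeasurableSet (Bn n) := fun n =>
      (hAn_meas n).image_of_continuousOn_injOn ((hcont _).mono (hAnD n))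
        ((hinj _).mono (hAnD n))
    have hgiBn : ∀ n w, w ∈ An n → g i (g (σ n) w) = w := fun n w hw =>
      (hTprop _ _ ((hAn_sub n hw).2)).2
    have hBn_disj : Pairwise (Function.onFun Disjoint Bn) := by
      intro a b hab
      refine Set.disjoint_left.2 ?_
      rintro - ⟨w1, hw1, rfl⟩ ⟨w2, hw2, heq⟩
      have h1 : g i (g (σ a) w1) = w1 := hgiBn a w1 hw1
      have h2 : g i (g (σ b) w2) = w2 := hgiBn b w2 hw2
      have hww : w2 = w1 := by rw [← h1, ← h2, heq]
      exact (disjoint_disjointed Sn hab).le_bot ⟨hw1, hww ▸ hw2⟩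
    calc μ (g i '' E) = μ (⋃ n, An n) := by rw [hUnion]
      _ ≤ ∑' n, μ (An n) := measure_iUnion_le _
      _ ≤ ∑' n, μ (Bn n) := ENNReal.tsum_le_tsum fun n =>
          hforward (σ n) (An n) (hAn_meas n) (hAnD n)
      _ = μ (⋃ n, Bn n) := (measure_iUnion hBn_disj hBn_meas).symm
      _ ≤ μ E := measure_mono (iUnion_subset hBn_subE)
  have hKc : μ Kᶜ = 0 :=
    le_antisymm (le_trans (hμ_open_le hK.isOpen_compl) hm_Kc.le) zero_le
  exact hnomeas ⟨μ, hPM, fun i E hE hED => le_antisymm (hrev i E hE hED)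
    (hforward i E hE hED), hKc⟩
end

section
/- Local geometric entropy bounds global geometric entropy: for a compactly generated pseudogroup G on a metric space T, the geometric entropy satisfies h(G) = sup_{x ∈ T} h_loc(G,x), where h_loc(G,x) is defined by the same separated-set limit restricted to balls B(x,δ) and letting δ → 0. In particular h(G) ≥ h_loc(G,x) for every x, and if T is compact, a finite cover of T by balls B(x_i,δ) gives h(G, T) ≤ max_i h(G, B(x_i,δ)). -/
open Filter Set
open scoped ENNReal

/-- The geometric entropy `h(G,X) = lim_{ε→0} limsup_k ln h(G,X,k,ε)/k` of a pseudogroup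
on the subset `X`, expressed (by monotonicity in `ε`) as the supremum over `ε > 0`;
`maxsep X k ε` is the maximal cardinality of a `(k,ε)`-separated subset of `X`. -/
noncomputable def entOn {T : Type*} [MetricSpace T]
    (maxsep : Set T → ℕ → ℝ → ℕ) (X : Set T) : ℝ≥0∞ :=
  ⨆ (ε : ℝ) (_ : 0 < ε),
    Filter.limsup (fun k : ℕ => ENNReal.ofReal (Real.log (maxsep X k ε) / k)) atTop

/-- The local geometric entropy `h_loc(G,x) = lim_{δ→0} h(G, B(x,δ))`, expressed (by
monotonicity in `δ`) as the infimum over `δ > 0`. -/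
noncomputable def entLoc {T : Type*} [MetricSpace T]
    (maxsep : Set T → ℕ → ℝ → ℕ) (x : T) : ℝ≥0∞ :=
  ⨅ (δ : ℝ) (_ : 0 < δ), entOn maxsep (Metric.ball x δ)

private lemma lognat_mono {m n : ℕ} (h : m ≤ n) : Real.log m ≤ Real.log n := by
  rcases Nat.eq_zero_or_pos m with rfl | hm
  · simpa using Real.log_natCast_nonneg n
  · exact Real.log_le_log (by exact_mod_cast hm) (by exact_mod_cast h)

/-- Local geometric entropy bounds global geometric entropy: for a compactly generated
pseudogroup `G` (elements `g` with domains `dom g`, action `ap g`, and word length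
`wlen g`) on a compact metric space `T`, the geometric entropy satisfies
`h(G) = sup_{x ∈ T} h_loc(G,x)`.  Here `maxsep X k ε` realizes the maximal cardinality of
a `(k,ε)`-separated subset of `X`. -/
theorem stmt_19 {T : Type*} [MetricSpace T] [CompactSpace T] {G : Type*}
    (dom : G → Set T) (ap : G → T → T) (wlen : G → ℕ)
    (maxsep : Set T → ℕ → ℝ → ℕ)
    (hmax : ∀ (X : Set T) (k : ℕ) (ε : ℝ), 0 < ε →
      IsGreatest {n : ℕ | ∃ S : Finset T, (S : Set T) ⊆ X ∧
        (∀ a ∈ S, ∀ b ∈ S, a ≠ b → ∃ g : G, wlen g ≤ k ∧ a ∈ dom g ∧ b ∈ dom g ∧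
          ε ≤ dist (ap g a) (ap g b)) ∧ S.card = n} (maxsep X k ε)) :
    entOn maxsep Set.univ = ⨆ x : T, entLoc maxsep x := by
  classical
  -- monotonicity of maxsep in X
  have hmono : ∀ {X Y : Set T} (k : ℕ) {ε : ℝ}, 0 < ε → X ⊆ Y →
      maxsep X k ε ≤ maxsep Y k ε := by
    intro X Y k ε hε hXY
    obtain ⟨S, hS, hsep, hcard⟩ := (hmax X k ε hε).1
    exact (hmax Y k ε hε).2 ⟨S, hS.trans hXY, hsep, hcard⟩
  -- monotonicity of entOn
  have hentmono : ∀ {X Y : Set T}, X ⊆ Y → entOn maxsep X ≤ entOn maxsep Y := by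
    intro X Y hXY
    refine iSup_mono fun ε => iSup_mono' fun hε => ⟨hε, ?_⟩
    refine Filter.limsup_le_limsup (Eventually.of_forall fun k => ?_)
    refine ENNReal.ofReal_le_ofReal ?_
    have h1 : Real.log (maxsep X k ε) ≤ Real.log (maxsep Y k ε) :=
      lognat_mono (hmono k hε hXY)
    rcases Nat.eq_zero_or_pos k with rfl | hk
    · simp
    · exact div_le_div_of_nonneg_right h1 (by positivity)
  -- easy direction : sup of local entropies ≤ global
  have hge : (⨆ x : T, entLoc maxsep x) ≤ entOn maxsep Set.univ := by
    refine iSup_le fun x => ?_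
    calc entLoc maxsep x ≤ entOn maxsep (Metric.ball x 1) := iInf₂_le 1 one_pos
      _ ≤ entOn maxsep Set.univ := hentmono (subset_univ _)
  rcases isEmpty_or_nonempty T with hT | hT
  · -- empty space : both sides are zero
    have hz : ∀ (k : ℕ) (ε : ℝ), 0 < ε → maxsep Set.univ k ε = 0 := by
      intro k ε hε
      obtain ⟨S, _, _, hcard⟩ := (hmax Set.univ k ε hε).1
      rw [← hcard, Finset.card_eq_zero]
      exact Finset.eq_empty_of_isEmpty S
    rw [iSup_of_empty]
    refine le_antisymm (iSup_le fun ε => iSup_le fun hε => ?_) bot_le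
    have : (fun k : ℕ => ENNReal.ofReal (Real.log (maxsep Set.univ k ε) / k))
        = fun _ => (0 : ℝ≥0∞) := funext fun k => by rw [hz k ε hε]; simp
    rw [this, limsup_const]
    exact le_rfl
  refine le_antisymm ?_ hge
  by_contra hlt
  rw [not_le] at hlt
  obtain ⟨c, hc1, hc2⟩ := exists_between hlt
  refine absurd ?_ (not_le.2 hc2)
  -- choose good radii
  have hδ : ∀ x : T, ∃ δ : ℝ, 0 < δ ∧ entOn maxsep (Metric.ball x δ) < c := by
    intro x
    have hx : entLoc maxsep x < c :=
      lt_of_le_of_lt (le_iSup (fun x => entLoc maxsep x) x) hc1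
    simp only [entLoc, iInf_lt_iff] at hx
    obtain ⟨δ, hδpos, hlt⟩ := hx
    exact ⟨δ, hδpos, hlt⟩
  choose δ hδpos hδlt using hδ
  -- finite subcover
  obtain ⟨t, ht⟩ := isCompact_univ.elim_finite_subcover
    (fun x : T => Metric.ball x (δ x)) (fun x => Metric.isOpen_ball)
    (fun x _ => mem_iUnion.2 ⟨x, Metric.mem_ball_self (hδpos x)⟩)
  have htne : t.Nonempty := by
    obtain ⟨x0⟩ := hT
    have := ht (mem_univ x0)
    rw [mem_iUnion₂] at this
    obtain ⟨i, hit, _⟩ := this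
    exact ⟨i, hit⟩
  -- subadditivity over the cover
  have hsub : ∀ (k : ℕ) (ε : ℝ), 0 < ε →
      maxsep Set.univ k ε ≤ ∑ i ∈ t, maxsep (Metric.ball i (δ i)) k ε := by
    intro k ε hε
    obtain ⟨S, _, hsep, hcard⟩ := (hmax Set.univ k ε hε).1
    rw [← hcard]
    have hcover : S ⊆ t.biUnion (fun i => S.filter (· ∈ Metric.ball i (δ i))) := by
      intro a ha
      have h1 : a ∈ ⋃ i ∈ t, Metric.ball i (δ i) := ht (mem_univ a)
      rw [mem_iUnion₂] at h1
      obtain ⟨i, hit, hai⟩ := h1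
      exact Finset.mem_biUnion.2 ⟨i, hit, Finset.mem_filter.2 ⟨ha, hai⟩⟩
    calc S.card ≤ (t.biUnion (fun i => S.filter (· ∈ Metric.ball i (δ i)))).card :=
          Finset.card_le_card hcover
      _ ≤ ∑ i ∈ t, (S.filter (· ∈ Metric.ball i (δ i))).card := Finset.card_biUnion_le
      _ ≤ ∑ i ∈ t, maxsep (Metric.ball i (δ i)) k ε := by
          refine Finset.sum_le_sum fun i _ => ?_
          refine (hmax _ k ε hε).2 ⟨S.filter (· ∈ Metric.ball i (δ i)), ?_, ?_, rfl⟩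
          · intro a ha
            simp only [Finset.coe_filter, mem_setOf_eq] at ha
            exact ha.2
          · intro a ha b hb hab
            exact hsep a (Finset.mem_filter.1 ha).1 b (Finset.mem_filter.1 hb).1 hab
  -- main bound : entOn univ ≤ c
  refine iSup_le fun ε => iSup_le fun hε => ?_
  refine le_of_forall_gt_imp_ge_of_dense fun d hd => ?_
  rcases eq_or_ne d ⊤ with rfl | hdtop
  · exact le_top
  obtain ⟨c', hcc', hc'd⟩ := exists_between hd
  have hc'top : c' ≠ ⊤ := (hc'd.trans_le le_top).ne
  -- each ball's limsup is eventually below c'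
  have hev1 : ∀ᶠ k in atTop, ∀ i ∈ t,
      ENNReal.ofReal (Real.log (maxsep (Metric.ball i (δ i)) k ε) / k) < c' := by
    rw [eventually_all_finset]
    intro i _
    refine eventually_lt_of_limsup_lt ?_
    refine lt_of_le_of_lt ?_ ((hδlt i).trans hcc')
    exact le_iSup₂_of_le ε hε le_rfl
  -- the log of the number of balls, divided by k, tends to 0
  have hpos : (0 : ℝ≥0∞) < d - c' := by
    rw [tsub_pos_iff_lt]; exact hc'd
  have htend : Tendsto (fun k : ℕ => ENNReal.ofReal (Real.log t.card / k)) atTop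
      (nhds 0) := by
    have := ENNReal.tendsto_ofReal (tendsto_const_div_atTop_nhds_zero_nat (Real.log t.card))
    simpa using this
  have hev2 : ∀ᶠ k : ℕ in atTop,
      ENNReal.ofReal (Real.log t.card / (k : ℝ)) < d - c' :=
    htend.eventually_lt_const hpos
  have hev3 : ∀ᶠ k in atTop, 1 ≤ k := eventually_ge_atTop 1
  refine Filter.limsup_le_of_le (by isBoundedDefault) ?_
  filter_upwards [hev1, hev2, hev3] with k h1 h2 h3
  set M : T → ℕ := fun i => maxsep (Metric.ball i (δ i)) k ε with hM
  obtain ⟨i0, hi0t, hi0⟩ := Finset.exists_mem_eq_sup t htne M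
  set mx : ℕ := t.sup M with hmxdef
  rcases Nat.eq_zero_or_pos mx with hmx | hmx
  · -- all counts are zero
    have hf0 : maxsep Set.univ k ε = 0 := by
      have h4 := hsub k ε hε
      have hz : ∑ i ∈ t, maxsep (Metric.ball i (δ i)) k ε = 0 := by
        refine Finset.sum_eq_zero fun i hi => ?_
        have h5 : M i ≤ mx := Finset.le_sup hi
        exact Nat.le_zero.1 (hmx ▸ h5)
      omega
    rw [hf0]
    simp
  · -- main estimate
    have hcard1 : 1 ≤ t.card := Finset.card_pos.2 htne
    have hle : (maxsep Set.univ k ε : ℝ) ≤ (t.card : ℝ) * (mx : ℝ) := by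
      have h4 : maxsep Set.univ k ε ≤ t.card * mx := by
        calc maxsep Set.univ k ε ≤ ∑ i ∈ t, M i := hsub k ε hε
          _ ≤ t.card * mx := by
            have := Finset.sum_le_card_nsmul t M mx fun i hi => Finset.le_sup hi
            simpa [smul_eq_mul] using this
      exact_mod_cast h4
    have hlog : Real.log (maxsep Set.univ k ε) ≤
        Real.log (t.card : ℝ) + Real.log (mx : ℝ) := by
      rcases Nat.eq_zero_or_pos (maxsep Set.univ k ε) with hf | hf
      · rw [hf]
        simp only [Nat.cast_zero, Real.log_zero]
        exact add_nonneg (Real.log_natCast_nonneg _) (Real.log_natCast_nonneg _)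
      · calc Real.log (maxsep Set.univ k ε) ≤ Real.log ((t.card : ℝ) * (mx : ℝ)) :=
              Real.log_le_log (by exact_mod_cast hf) hle
          _ = Real.log (t.card : ℝ) + Real.log (mx : ℝ) := by
              rw [Real.log_mul (by positivity) (by exact_mod_cast hmx.ne')]
    have hkpos : (0 : ℝ) < k := by exact_mod_cast h3
    have hdiv : Real.log (maxsep Set.univ k ε) / k ≤
        Real.log (t.card : ℝ) / k + Real.log (mx : ℝ) / k := by
      rw [← add_div]
      exact div_le_div_of_nonneg_right hlog hkpos.le
    calc ENNReal.ofReal (Real.log (maxsep Set.univ k ε) / k)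
        ≤ ENNReal.ofReal (Real.log (t.card : ℝ) / k + Real.log (mx : ℝ) / k) :=
          ENNReal.ofReal_le_ofReal hdiv
      _ ≤ ENNReal.ofReal (Real.log (t.card : ℝ) / k) + ENNReal.ofReal (Real.log (mx : ℝ) / k) :=
          ENNReal.ofReal_add_le
      _ ≤ (d - c') + c' := by
          refine add_le_add h2.le ?_
          have : (mx : ℕ) = M i0 := hi0
          rw [this]
          exact (h1 i0 hi0t).le
      _ = d := tsub_add_cancel_of_le hc'd.le
end
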